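/- arXiv:1703.07106 — 9 statements merged into one kernel-verified Lean document; each statement's English description precedes it below -/
import Mathlib

section
/- Let G be a finite simple graph whose vertex set admits a partition (A, C, B) with A and B nonempty and no edges between A and B. If the induced subgraph G[A ∪ C] admits a CS-separator of size f₁ and the induced subgraph G[B ∪ C] admits a CS-separator of size f₂, then G admits a CS-separator of size at most f₁ + f₂. -/
open SimpleGraph

variable {V : Type*}

/-- `S` is a stable set (independent set) of `G`. -/
def IsStableSet (G : SimpleGraph V) (S : Set V) : Prop :=
  S.Pairwise fun u v => ¬ G.Adj u v

/-- `𝒞` is a Clique-Stable set separator (CS-separator) for the induced subgraph `G[A]`: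
a family of subsets of `A` such that for every clique `K ⊆ A` and every stable set `S ⊆ A`
of `G` with `K ∩ S = ∅`, some `W ∈ 𝒞` satisfies `K ⊆ W` and `S ⊆ A ∖ W`. -/
def IsCSSeparatorOn (G : SimpleGraph V) (A : Set V) (𝒞 : Finset (Finset V)) : Prop :=
  (∀ W ∈ 𝒞, (W : Set V) ⊆ A) ∧
  ∀ K S : Finset V, (K : Set V) ⊆ A → (S : Set V) ⊆ A →
    G.IsClique (K : Set V) → IsStableSet G (S : Set V) → Disjoint K S →
    ∃ W ∈ 𝒞, K ⊆ W ∧ Disjoint S W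

/-- The induced subgraph `G[A]` admits a CS-separator of size at most `f`. -/
def HasCSSepOn (G : SimpleGraph V) (A : Set V) (f : ℕ) : Prop :=
  ∃ 𝒞 : Finset (Finset V), 𝒞.card ≤ f ∧ IsCSSeparatorOn G A 𝒞

/-- cutset decomposition is valid. -/
theorem stmt_1 [Finite V] (G : SimpleGraph V) (A C B : Set V)
    (hpart : A ∪ C ∪ B = Set.univ)
    (hAC : Disjoint A C) (hAB : Disjoint A B) (hCB : Disjoint C B)
    (hA : A.Nonempty) (hB : B.Nonempty)
    (hanti : ∀ a ∈ A, ∀ b ∈ B, ¬ G.Adj a b)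
    (f₁ f₂ : ℕ)
    (h₁ : HasCSSepOn G (A ∪ C) f₁) (h₂ : HasCSSepOn G (B ∪ C) f₂) :
    HasCSSepOn G Set.univ (f₁ + f₂) := by
  classical
  obtain ⟨𝒞₁, hc1, hsub1, hsep1⟩ := h₁
  obtain ⟨𝒞₂, hc2, hsub2, hsep2⟩ := h₂
  refine ⟨𝒞₁ ∪ 𝒞₂, le_trans (Finset.card_union_le _ _) (add_le_add hc1 hc2), ?_, ?_⟩
  · intro W _
    exact Set.subset_univ _
  · intro K S _ _ hK hS hdisj
    have hmem : ∀ v : V, v ∈ A ∪ C ∪ B := by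
      intro v; rw [hpart]; trivial
    have hcase : (K : Set V) ⊆ A ∪ C ∨ (K : Set V) ⊆ B ∪ C := by
      by_contra h
      push_neg at h
      obtain ⟨h1, h2⟩ := h
      obtain ⟨b, hbK, hbn⟩ := Set.not_subset.mp h1
      obtain ⟨a, haK, han⟩ := Set.not_subset.mp h2
      have hbB : b ∈ B := by
        rcases hmem b with h | h
        · exact absurd h hbn
        · exact h
      have haA : a ∈ A := by
        rcases hmem a with h | h
        · rcases h with h | h
          · exact h
          · exact absurd (Or.inr h : a ∈ B ∪ C) han
        · exact absurd (Or.inl h : a ∈ B ∪ C) han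
      have hne : a ≠ b := by
        rintro rfl
        exact Set.disjoint_left.mp hAB haA hbB
      exact hanti a haA b hbB (hK haK hbK hne)
    have key : ∀ (D : Set V) (𝒞 : Finset (Finset V)),
        (∀ W ∈ 𝒞, (W : Set V) ⊆ D) →
        (∀ K' S' : Finset V, (K' : Set V) ⊆ D → (S' : Set V) ⊆ D →
          G.IsClique (K' : Set V) → IsStableSet G (S' : Set V) → Disjoint K' S' →
          ∃ W ∈ 𝒞, K' ⊆ W ∧ Disjoint S' W) →
        (K : Set V) ⊆ D → ∃ W ∈ 𝒞, K ⊆ W ∧ Disjoint S W := by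
      intro D 𝒞 hsub hsep hKD
      set S' := S.filter (fun v => v ∈ D) with hS'def
      have hS'S : S' ⊆ S := Finset.filter_subset _ _
      have hS'D : (S' : Set V) ⊆ D := by
        intro v hv
        simp only [hS'def, Finset.coe_filter, Set.mem_setOf_eq] at hv
        exact hv.2
      have hS'stable : IsStableSet G (S' : Set V) :=
        hS.mono (by exact_mod_cast hS'S)
      obtain ⟨W, hW, hKW, hSW⟩ :=
        hsep K S' hKD hS'D hK hS'stable (hdisj.mono_right hS'S)
      refine ⟨W, hW, hKW, Finset.disjoint_left.mpr fun v hvS hvW => ?_⟩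
      have hvD : v ∈ D := hsub W hW hvW
      have : v ∈ S' := by
        simp only [hS'def, Finset.mem_filter]
        exact ⟨hvS, hvD⟩
      exact Finset.disjoint_left.mp hSW this hvW
    rcases hcase with hKsub | hKsub
    · obtain ⟨W, hW, h1, h2⟩ := key (A ∪ C) 𝒞₁ hsub1 hsep1 hKsub
      exact ⟨W, Finset.mem_union_left _ hW, h1, h2⟩
    · obtain ⟨W, hW, h1, h2⟩ := key (B ∪ C) 𝒞₂ hsub2 hsep2 hKsub
      exact ⟨W, Finset.mem_union_right _ hW, h1, h2⟩
end

section
/- Let G be a finite simple graph whose vertex set admits a partition (A, B) with A and B nonempty such that every vertex of A is adjacent to every vertex of B. If the induced subgraph G[A] admits a CS-separator of size f₁ and the induced subgraph G[B] admits a CS-separator of size f₂, then G admits a CS-separator of size at most f₁ + f₂. -/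
open SimpleGraph

variable {V : Type*}

/-- anticomponent decomposition is valid. -/
theorem stmt_2 [Finite V] (G : SimpleGraph V) (A B : Set V)
    (hpart : A ∪ B = Set.univ) (hdisj : Disjoint A B)
    (hA : A.Nonempty) (hB : B.Nonempty)
    (hcomp : ∀ a ∈ A, ∀ b ∈ B, G.Adj a b)
    (f₁ f₂ : ℕ)
    (h₁ : HasCSSepOn G A f₁) (h₂ : HasCSSepOn G B f₂) :
    HasCSSepOn G Set.univ (f₁ + f₂) := by
  classical
  haveI := Fintype.ofFinite V
  obtain ⟨C1, hc1, hC1A, hsep1⟩ := h₁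
  obtain ⟨C2, hc2, hC2B, hsep2⟩ := h₂
  refine ⟨C1.image (· ∪ B.toFinset) ∪ C2.image (· ∪ A.toFinset), ?_, ?_, ?_⟩
  · calc (C1.image (· ∪ B.toFinset) ∪ C2.image (· ∪ A.toFinset)).card
        ≤ (C1.image (· ∪ B.toFinset)).card + (C2.image (· ∪ A.toFinset)).card :=
          Finset.card_union_le _ _
      _ ≤ C1.card + C2.card := Nat.add_le_add (Finset.card_image_le) (Finset.card_image_le)
      _ ≤ f₁ + f₂ := Nat.add_le_add hc1 hc2
  · intro W _ x _; exact Set.mem_univ x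
  · intro K S _ _ hKcl hSst hKS
    have hmem : ∀ x : V, x ∈ A ∨ x ∈ B := by
      intro x
      have : x ∈ A ∪ B := hpart ▸ Set.mem_univ x
      exact this
    have hScase : (S : Set V) ⊆ A ∨ (S : Set V) ⊆ B := by
      by_cases h : (S : Set V) ⊆ A
      · exact Or.inl h
      · right
        obtain ⟨b, hbS, hbA⟩ := Set.not_subset.1 h
        have hbB : b ∈ B := (hmem b).resolve_left hbA
        intro s hs
        by_contra hsB
        have hsA : s ∈ A := (hmem s).resolve_right hsB
        have hne : s ≠ b := fun e => hbA (e ▸ hsA)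
        exact hSst hs hbS hne (hcomp s hsA b hbB)
    rcases hScase with hSA | hSB
    · have hKA : ((K ∩ A.toFinset : Finset V) : Set V) ⊆ A := by
        intro x hx
        simp only [Finset.coe_inter, Set.mem_inter_iff, Set.coe_toFinset] at hx
        exact hx.2
      have hKcl' : G.IsClique ((K ∩ A.toFinset : Finset V) : Set V) :=
        hKcl.subset (by intro x hx; simp only [Finset.coe_inter, Set.mem_inter_iff] at hx; exact hx.1)
      obtain ⟨W, hW, hKW, hSW⟩ := hsep1 (K ∩ A.toFinset) S hKA hSA hKcl' hSst
        (hKS.mono_left (Finset.inter_subset_left))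
      refine ⟨W ∪ B.toFinset, Finset.mem_union_left _ (Finset.mem_image_of_mem _ hW), ?_, ?_⟩
      · intro x hx
        rcases hmem x with hxA | hxB
        · exact Finset.mem_union_left _ (hKW (Finset.mem_inter.2 ⟨hx, Set.mem_toFinset.2 hxA⟩))
        · exact Finset.mem_union_right _ (Set.mem_toFinset.2 hxB)
      · refine Finset.disjoint_union_right.2 ⟨hSW, ?_⟩
        rw [Finset.disjoint_left]
        intro x hx hxB
        exact (hdisj.le_bot ⟨hSA hx, Set.mem_toFinset.1 hxB⟩)
    · have hKB : ((K ∩ B.toFinset : Finset V) : Set V) ⊆ B := by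
        intro x hx
        simp only [Finset.coe_inter, Set.mem_inter_iff, Set.coe_toFinset] at hx
        exact hx.2
      have hKcl' : G.IsClique ((K ∩ B.toFinset : Finset V) : Set V) :=
        hKcl.subset (by intro x hx; simp only [Finset.coe_inter, Set.mem_inter_iff] at hx; exact hx.1)
      obtain ⟨W, hW, hKW, hSW⟩ := hsep2 (K ∩ B.toFinset) S hKB hSB hKcl' hSst
        (hKS.mono_left (Finset.inter_subset_left))
      refine ⟨W ∪ A.toFinset, Finset.mem_union_right _ (Finset.mem_image_of_mem _ hW), ?_, ?_⟩
      · intro x hx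
        rcases hmem x with hxA | hxB
        · exact Finset.mem_union_right _ (Set.mem_toFinset.2 hxA)
        · exact Finset.mem_union_left _ (hKW (Finset.mem_inter.2 ⟨hx, Set.mem_toFinset.2 hxB⟩))
      · refine Finset.disjoint_union_right.2 ⟨hSW, ?_⟩
        rw [Finset.disjoint_left]
        intro x hx hxA
        exact (hdisj.le_bot ⟨Set.mem_toFinset.1 hxA, hSB hx⟩)
end

section
/- Let G be a finite simple graph, let M ⊆ V(G) be a nontrivial module of G (i.e., 1 < |M| < |V(G)|), and let m ∈ M. If the induced subgraph G[M] admits a CS-separator of size f₁ and the induced subgraph G[{m} ∪ (V(G) ∖ M)] admits a CS-separator of size f₂, then G admits a CS-separator of size at most f₁ + f₂. -/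
open SimpleGraph

variable {V : Type*}

/-- module decomposition is valid. -/
theorem stmt_3 [Finite V] (G : SimpleGraph V) (M : Set V) (m : V)
    (hmod : ∀ v ∉ M, (∀ u ∈ M, G.Adj v u) ∨ (∀ u ∈ M, ¬ G.Adj v u))
    (hbig : 1 < M.ncard) (hproper : M.ncard < Nat.card V)
    (hm : m ∈ M) (f₁ f₂ : ℕ)
    (h₁ : HasCSSepOn G M f₁) (h₂ : HasCSSepOn G ({m} ∪ Mᶜ) f₂) :
    HasCSSepOn G Set.univ (f₁ + f₂) := by
  classical
  have _inst : Fintype V := Fintype.ofFinite V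
  obtain ⟨𝒞₁, hc₁, hsub₁, hsep₁⟩ := h₁
  obtain ⟨𝒞₂, hc₂, hsub₂, hsep₂⟩ := h₂
  set MF : Finset V := Finset.univ.filter (· ∈ M) with hMF
  have hMFmem : ∀ v, v ∈ MF ↔ v ∈ M := by intro v; simp [hMF]
  set A : Finset V := Finset.univ.filter (fun v => v ∉ M ∧ ∀ u ∈ M, G.Adj v u) with hA
  have hAmem : ∀ v, v ∈ A ↔ (v ∉ M ∧ ∀ u ∈ M, G.Adj v u) := by intro v; simp [hA]
  refine ⟨𝒞₁.image (fun W => W ∪ A) ∪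
      𝒞₂.image (fun W => if m ∈ W then (W \ {m}) ∪ MF else W), ?_,
      fun W _ => Set.subset_univ _, ?_⟩
  · calc _ ≤ (𝒞₁.image (fun W => W ∪ A)).card +
        (𝒞₂.image (fun W => if m ∈ W then (W \ {m}) ∪ MF else W)).card :=
        Finset.card_union_le _ _
      _ ≤ f₁ + f₂ :=
        Nat.add_le_add (Finset.card_image_le.trans hc₁) (Finset.card_image_le.trans hc₂)
  · intro K S _ _ hK hS hdisj
    set KM := K.filter (· ∈ M) with hKMdef
    set KO := K.filter (· ∉ M) with hKOdef
    set SM := S.filter (· ∈ M) with hSMdef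
    set SO := S.filter (· ∉ M) with hSOdef
    have hKMmem : ∀ v, v ∈ KM ↔ v ∈ K ∧ v ∈ M := by intro v; simp [hKMdef]
    have hKOmem : ∀ v, v ∈ KO ↔ v ∈ K ∧ v ∉ M := by intro v; simp [hKOdef]
    have hSMmem : ∀ v, v ∈ SM ↔ v ∈ S ∧ v ∈ M := by intro v; simp [hSMdef]
    have hSOmem : ∀ v, v ∈ SO ↔ v ∈ S ∧ v ∉ M := by intro v; simp [hSOdef]
    -- completeness of K-outside vertices to M, when K meets M
    have hKcompl : KM.Nonempty → ∀ k, k ∈ K → k ∉ M → ∀ u ∈ M, G.Adj k u := by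
      rintro ⟨u0, hu0⟩ k hkK hkM
      obtain ⟨hu0K, hu0M⟩ := (hKMmem u0).1 hu0
      rcases hmod k hkM with h | h
      · exact h
      · exact absurd (hK hkK hu0K (by rintro rfl; exact hkM hu0M)) (h u0 hu0M)
    have hSanti : SM.Nonempty → ∀ s, s ∈ S → s ∉ M → ∀ u ∈ M, ¬ G.Adj s u := by
      rintro ⟨u0, hu0⟩ s hsS hsM
      obtain ⟨hu0S, hu0M⟩ := (hSMmem u0).1 hu0
      rcases hmod s hsM with h | h
      · exact absurd (h u0 hu0M) (hS hsS hu0S (by rintro rfl; exact hsM hu0M))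
      · exact h
    by_cases hcase : KM.Nonempty ∧ SM.Nonempty
    · obtain ⟨hKMne, hSMne⟩ := hcase
      obtain ⟨W₁, hW₁, hKW, hSW⟩ := hsep₁ KM SM
        (by intro x hx; exact ((hKMmem x).1 (by exact_mod_cast hx)).2)
        (by intro x hx; exact ((hSMmem x).1 (by exact_mod_cast hx)).2)
        (hK.subset (by intro x hx; exact ((hKMmem x).1 (by exact_mod_cast hx)).1))
        (hS.mono (by intro x hx; exact ((hSMmem x).1 (by exact_mod_cast hx)).1))
        (hdisj.mono (Finset.filter_subset _ _) (Finset.filter_subset _ _))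
      refine ⟨W₁ ∪ A, Finset.mem_union_left _ (Finset.mem_image.2 ⟨W₁, hW₁, rfl⟩), ?_, ?_⟩
      · intro k hk
        by_cases hkM : k ∈ M
        · exact Finset.mem_union_left _ (hKW ((hKMmem k).2 ⟨hk, hkM⟩))
        · exact Finset.mem_union_right _ ((hAmem k).2 ⟨hkM, hKcompl hKMne k hk hkM⟩)
      · rw [Finset.disjoint_left]
        intro s hsS hsW
        rcases Finset.mem_union.1 hsW with hsW₁ | hsA
        · by_cases hsM : s ∈ M
          · exact Finset.disjoint_left.1 hSW ((hSMmem s).2 ⟨hsS, hsM⟩) hsW₁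
          · exact hsM (hsub₁ W₁ hW₁ hsW₁)
        · obtain ⟨hsM, hcompl⟩ := (hAmem s).1 hsA
          obtain ⟨u0, hu0⟩ := hSMne
          obtain ⟨hu0S, hu0M⟩ := (hSMmem u0).1 hu0
          exact hS hsS hu0S (by rintro rfl; exact hsM hu0M) (hcompl u0 hu0M)
    · -- at most one of K, S meets M
      set K' : Finset V := KO ∪ (if KM.Nonempty then {m} else ∅) with hK'def
      set S' : Finset V := SO ∪ (if SM.Nonempty then {m} else ∅) with hS'def
      have hmK' : KM.Nonempty → m ∈ K' := by
        intro h; rw [hK'def]; simp [h]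
      have hmS' : SM.Nonempty → m ∈ S' := by
        intro h; rw [hS'def]; simp [h]
      have hK'mem : ∀ v, v ∈ K' → v ∈ KO ∨ (v = m ∧ KM.Nonempty) := by
        intro v hv
        rcases Finset.mem_union.1 hv with h | h
        · exact Or.inl h
        · by_cases hne : KM.Nonempty
          · simp [hne] at h; exact Or.inr ⟨h, hne⟩
          · simp [hne] at h
      have hS'mem : ∀ v, v ∈ S' → v ∈ SO ∨ (v = m ∧ SM.Nonempty) := by
        intro v hv
        rcases Finset.mem_union.1 hv with h | h
        · exact Or.inl h
        · by_cases hne : SM.Nonempty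
          · simp [hne] at h; exact Or.inr ⟨h, hne⟩
          · simp [hne] at h
      have hK'sub : (K' : Set V) ⊆ {m} ∪ Mᶜ := by
        intro x hx
        rcases hK'mem x (by exact_mod_cast hx) with h | ⟨he, _⟩
        · exact Or.inr ((hKOmem x).1 h).2
        · exact Or.inl he
      have hS'sub : (S' : Set V) ⊆ {m} ∪ Mᶜ := by
        intro x hx
        rcases hS'mem x (by exact_mod_cast hx) with h | ⟨he, _⟩
        · exact Or.inr ((hSOmem x).1 h).2
        · exact Or.inl he
      have hK'clique : G.IsClique (K' : Set V) := by
        intro x hx y hy hxy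
        rcases hK'mem x (by exact_mod_cast hx) with hxO | ⟨hx', hne⟩ <;>
          rcases hK'mem y (by exact_mod_cast hy) with hyO | ⟨hy', hne'⟩
        · obtain ⟨hxK, _⟩ := (hKOmem x).1 hxO
          obtain ⟨hyK, _⟩ := (hKOmem y).1 hyO
          exact hK hxK hyK hxy
        · obtain ⟨hxK, hxM⟩ := (hKOmem x).1 hxO
          rw [hy']
          exact hKcompl hne' x hxK hxM m hm
        · obtain ⟨hyK, hyM⟩ := (hKOmem y).1 hyO
          rw [hx']
          exact (hKcompl hne y hyK hyM m hm).symm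
        · exact absurd (hx'.trans hy'.symm) hxy
      have hS'stable : IsStableSet G (S' : Set V) := by
        intro x hx y hy hxy
        rcases hS'mem x (by exact_mod_cast hx) with hxO | ⟨hx', hne⟩ <;>
          rcases hS'mem y (by exact_mod_cast hy) with hyO | ⟨hy', hne'⟩
        · obtain ⟨hxS, _⟩ := (hSOmem x).1 hxO
          obtain ⟨hyS, _⟩ := (hSOmem y).1 hyO
          exact hS hxS hyS hxy
        · obtain ⟨hxS, hxM⟩ := (hSOmem x).1 hxO
          rw [hy']
          exact hSanti hne' x hxS hxM m hm
        · obtain ⟨hyS, hyM⟩ := (hSOmem y).1 hyO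
          rw [hx']
          intro hadj
          exact hSanti hne y hyS hyM m hm hadj.symm
        · exact absurd (hx'.trans hy'.symm) hxy
      have hdisj' : Disjoint K' S' := by
        rw [Finset.disjoint_left]
        intro x hxK' hxS'
        rcases hK'mem x hxK' with hxO | ⟨hx', hne⟩ <;>
          rcases hS'mem x hxS' with hxO' | ⟨he, hne'⟩
        · exact Finset.disjoint_left.1 hdisj ((hKOmem x).1 hxO).1 ((hSOmem x).1 hxO').1
        · exact ((hKOmem x).1 hxO).2 (by rw [he]; exact hm)
        · exact ((hSOmem x).1 hxO').2 (by rw [hx']; exact hm)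
        · exact hcase ⟨hne, hne'⟩
      obtain ⟨W₂, hW₂, hKW, hSW⟩ := hsep₂ K' S' hK'sub hS'sub hK'clique hS'stable hdisj'
      refine ⟨if m ∈ W₂ then (W₂ \ {m}) ∪ MF else W₂,
        Finset.mem_union_right _ (Finset.mem_image.2 ⟨W₂, hW₂, rfl⟩), ?_, ?_⟩
      · intro k hk
        by_cases hkM : k ∈ M
        · have hne : KM.Nonempty := ⟨k, (hKMmem k).2 ⟨hk, hkM⟩⟩
          have hmW : m ∈ W₂ := hKW (hmK' hne)
          simp only [hmW, if_true]
          exact Finset.mem_union_right _ ((hMFmem k).2 hkM)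
        · have hkW : k ∈ W₂ := hKW (Finset.mem_union_left _ ((hKOmem k).2 ⟨hk, hkM⟩))
          by_cases hmW : m ∈ W₂
          · simp only [hmW, if_true]
            exact Finset.mem_union_left _
              (Finset.mem_sdiff.2 ⟨hkW, by simp; rintro rfl; exact hkM hm⟩)
          · simp only [hmW, if_false]; exact hkW
      · rw [Finset.disjoint_left]
        intro s hsS hsW
        by_cases hmW : m ∈ W₂
        · simp only [hmW, if_true] at hsW
          have hSMe : ¬ SM.Nonempty := fun h =>
            Finset.disjoint_left.1 hSW (hmS' h) hmW
          have hsM : s ∉ M := fun h => hSMe ⟨s, (hSMmem s).2 ⟨hsS, h⟩⟩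
          rcases Finset.mem_union.1 hsW with h | h
          · exact Finset.disjoint_left.1 hSW
              (Finset.mem_union_left _ ((hSOmem s).2 ⟨hsS, hsM⟩)) (Finset.mem_sdiff.1 h).1
          · exact hsM ((hMFmem s).1 h)
        · simp only [hmW, if_false] at hsW
          have hsM : s ∉ M := by
            rcases hsub₂ W₂ hW₂ hsW with h | h
            · rcases h with rfl; exact absurd hsW hmW
            · exact h
          exact Finset.disjoint_left.1 hSW
            (Finset.mem_union_left _ ((hSOmem s).2 ⟨hsS, hsM⟩)) hsW
end

section
/- Let G be a finite simple graph and let v be a vertex of G. If the graph G ∖ v (the induced subgraph on V(G) ∖ {v}) admits a CS-separator of size f₁ and the induced subgraph G[N(v)] on the neighborhood of v admits a CS-separator of size f₂, then G admits a CS-separator of size at most f₁ + f₂. -/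
open SimpleGraph

variable {V : Type*}

/-- neighborhood decomposition is valid. -/
theorem stmt_4 [Finite V] (G : SimpleGraph V) (v : V) (f₁ f₂ : ℕ)
    (h₁ : HasCSSepOn G ({v}ᶜ) f₁)
    (h₂ : HasCSSepOn G (G.neighborSet v) f₂) :
    HasCSSepOn G Set.univ (f₁ + f₂) := by
  classical
  obtain ⟨𝒞₁, hc1, hsub1, hsep1⟩ := h₁
  obtain ⟨𝒞₂, hc2, hsub2, hsep2⟩ := h₂
  refine ⟨𝒞₁ ∪ 𝒞₂.image (insert v), ?_, ?_, ?_⟩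
  · calc (𝒞₁ ∪ 𝒞₂.image (insert v)).card ≤ 𝒞₁.card + (𝒞₂.image (insert v)).card :=
          Finset.card_union_le _ _
      _ ≤ f₁ + f₂ := add_le_add hc1 (le_trans (Finset.card_image_le) hc2)
  · intro W _ x _; exact Set.mem_univ x
  · intro K S _ _ hK hS hdisj
    by_cases hv : v ∈ K
    · have hKsub : ((K.erase v : Finset V) : Set V) ⊆ G.neighborSet v := by
        intro x hx
        simp only [Finset.coe_erase, Set.mem_diff, Set.mem_singleton_iff] at hx
        exact hK (Finset.mem_coe.mpr hv) hx.1 (Ne.symm hx.2)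
      set S' := S.filter (fun x => x ∈ G.neighborSet v) with hS'def
      have hS'sub : S' ⊆ S := Finset.filter_subset _ _
      have hS'nb : ((S' : Finset V) : Set V) ⊆ G.neighborSet v := by
        intro x hx
        simp only [hS'def, Finset.coe_filter, Set.mem_setOf_eq] at hx
        exact hx.2
      obtain ⟨W, hW, hKW, hSW⟩ := hsep2 (K.erase v) S' hKsub hS'nb
        (hK.subset (by simp [Finset.coe_erase, Set.diff_subset]))
        (hS.mono (by exact_mod_cast hS'sub))
        (hdisj.mono (Finset.erase_subset _ _) hS'sub)
      refine ⟨insert v W, Finset.mem_union_right _ (Finset.mem_image_of_mem _ hW), ?_, ?_⟩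
      · intro x hx
        by_cases hxv : x = v
        · simp [hxv]
        · exact Finset.mem_insert_of_mem (hKW (Finset.mem_erase.mpr ⟨hxv, hx⟩))
      · rw [Finset.disjoint_insert_right]
        constructor
        · exact fun hvS => (Finset.disjoint_left.mp hdisj hv) hvS
        · rw [Finset.disjoint_left]
          intro x hxS hxW
          have hxN : x ∈ G.neighborSet v := hsub2 W hW hxW
          have : x ∈ S' := Finset.mem_filter.mpr ⟨hxS, hxN⟩
          exact Finset.disjoint_left.mp hSW this hxW
    · have hKsub : ((K : Finset V) : Set V) ⊆ ({v}ᶜ : Set V) := by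
        intro x hx hxv
        exact hv (by rwa [Set.mem_singleton_iff.mp hxv] at hx)
      set S' := S.erase v with hS'def
      have hS'sub : S' ⊆ S := Finset.erase_subset _ _
      have hS'c : ((S' : Finset V) : Set V) ⊆ ({v}ᶜ : Set V) := by
        intro x hx hxv
        exact (Finset.mem_erase.mp hx).1 (Set.mem_singleton_iff.mp hxv)
      obtain ⟨W, hW, hKW, hSW⟩ := hsep1 K S' hKsub hS'c hK
        (hS.mono (by exact_mod_cast hS'sub))
        (hdisj.mono le_rfl hS'sub)
      refine ⟨W, Finset.mem_union_left _ hW, hKW, ?_⟩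
      rw [Finset.disjoint_left]
      intro x hxS hxW
      have hxv : x ≠ v := fun h => hsub1 W hW hxW (by rw [h]; rfl)
      exact Finset.disjoint_left.mp hSW (Finset.mem_erase.mpr ⟨hxv, hxS⟩) hxW
end

section
/- Let G be a finite simple graph and let v be a vertex of G. If the graph G ∖ v (the induced subgraph on V(G) ∖ {v}) admits a CS-separator of size f₁ and the induced subgraph G ∖ N[v] on the anti-neighborhood V(G) ∖ N[v] of v admits a CS-separator of size f₂, then G admits a CS-separator of size at most f₁ + f₂. -/
/-!
Take `{W ∪ {v} | W ∈ 𝒞₁} ∪ {W ∪ N(v) | W ∈ 𝒞₂}`. A clique `K` and a disjoint stable set `S`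
are separated by a set of the first kind when `v ∉ S`. When `v ∈ S`, the stable set `S` misses
`N(v)` and the clique `K` misses `v`, so a set of `𝒞₂` separating their traces on the
anti-neighborhood becomes a separating set once `N(v)` is added.
-/

open SimpleGraph

variable {V : Type*}

namespace IsCSSeparatorOn

variable {G : SimpleGraph V} {A : Set V} {𝒞 : Finset (Finset V)} {K S : Finset V} {v : V}

/-- The sets of `𝒞` lie inside `A`, so a set separating the traces on `A` avoids all of `S`. -/
theorem exists_filter_subset [DecidablePred (· ∈ A)] (h : IsCSSeparatorOn G A 𝒞)
    (hK : G.IsClique (K : Set V)) (hS : IsStableSet G (S : Set V)) (hKS : Disjoint K S) :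
    ∃ W ∈ 𝒞, {x ∈ K | x ∈ A} ⊆ W ∧ Disjoint S W := by
  obtain ⟨W, hW, hKW, hSW⟩ := h.2 {x ∈ K | x ∈ A} {x ∈ S | x ∈ A}
    (by simp [Set.subset_def]) (by simp [Set.subset_def])
    (hK.subset (Finset.coe_subset.2 (Finset.filter_subset _ _)))
    (hS.mono (Finset.coe_subset.2 (Finset.filter_subset _ _)))
    (Finset.disjoint_filter_filter hKS)
  refine ⟨W, hW, hKW, Finset.disjoint_left.2 fun x hxS hxW => ?_⟩
  exact Finset.disjoint_left.1 hSW (Finset.mem_filter.2 ⟨hxS, h.1 W hW hxW⟩) hxW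

theorem exists_insert [DecidableEq V] (h : IsCSSeparatorOn G {v}ᶜ 𝒞)
    (hK : G.IsClique (K : Set V)) (hS : IsStableSet G (S : Set V)) (hKS : Disjoint K S)
    (hvS : v ∉ S) :
    ∃ W ∈ 𝒞, K ⊆ insert v W ∧ Disjoint S (insert v W) := by
  obtain ⟨W, hW, hKW, hSW⟩ := h.exists_filter_subset hK hS hKS
  refine ⟨W, hW, fun x hx => ?_, Finset.disjoint_insert_right.2 ⟨hvS, hSW⟩⟩
  rcases eq_or_ne x v with rfl | hxv
  · exact Finset.mem_insert_self x W
  · exact Finset.mem_insert_of_mem (hKW (Finset.mem_filter.2 ⟨hx, hxv⟩))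

theorem exists_union_neighborFinset [DecidableEq V] [Fintype (G.neighborSet v)]
    (h : IsCSSeparatorOn G (insert v (G.neighborSet v))ᶜ 𝒞)
    (hK : G.IsClique (K : Set V)) (hS : IsStableSet G (S : Set V)) (hKS : Disjoint K S)
    (hvS : v ∈ S) :
    ∃ W ∈ 𝒞, K ⊆ W ∪ G.neighborFinset v ∧ Disjoint S (W ∪ G.neighborFinset v) := by
  classical
  obtain ⟨W, hW, hKW, hSW⟩ := h.exists_filter_subset hK hS hKS
  have hSN : Disjoint S (G.neighborFinset v) := Finset.disjoint_left.2 fun x hxS hxN =>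
    hS hvS hxS (G.ne_of_adj ((G.mem_neighborFinset v x).1 hxN)) ((G.mem_neighborFinset v x).1 hxN)
  refine ⟨W, hW, fun x hx => ?_, Finset.disjoint_union_right.2 ⟨hSW, hSN⟩⟩
  by_cases hxA : x ∈ (insert v (G.neighborSet v))ᶜ
  · exact Finset.mem_union_left _ (hKW (Finset.mem_filter.2 ⟨hx, hxA⟩))
  · rcases Set.not_notMem.1 hxA with rfl | hxN
    · exact absurd hvS (Finset.disjoint_left.1 hKS hx)
    · exact Finset.mem_union_right _ ((G.mem_neighborFinset _ _).2 hxN)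

end IsCSSeparatorOn

/-- anti-neighborhood decomposition is valid.  Here
`insert v (G.neighborSet v)` is the closed neighborhood `N[v]`, so its complement
is the anti-neighborhood of `v`. -/
theorem stmt_5 [Finite V] (G : SimpleGraph V) (v : V) (f₁ f₂ : ℕ)
    (h₁ : HasCSSepOn G ({v}ᶜ) f₁)
    (h₂ : HasCSSepOn G ((insert v (G.neighborSet v))ᶜ) f₂) :
    HasCSSepOn G Set.univ (f₁ + f₂) := by
  classical
  have := Fintype.ofFinite V
  obtain ⟨𝒞₁, hcard₁, hsep₁⟩ := h₁
  obtain ⟨𝒞₂, hcard₂, hsep₂⟩ := h₂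
  refine ⟨𝒞₁.image (insert v) ∪ 𝒞₂.image (· ∪ G.neighborFinset v), ?_,
    fun _ _ => Set.subset_univ _, fun K S _ _ hK hS hKS => ?_⟩
  · calc _ ≤ (𝒞₁.image (insert v)).card + (𝒞₂.image (· ∪ G.neighborFinset v)).card :=
          Finset.card_union_le _ _
      _ ≤ f₁ + f₂ := add_le_add (Finset.card_image_le.trans hcard₁)
          (Finset.card_image_le.trans hcard₂)
  by_cases hvS : v ∈ S
  · obtain ⟨W, hW, hKW, hSW⟩ := hsep₂.exists_union_neighborFinset hK hS hKS hvS
    exact ⟨_, Finset.mem_union_right _ (Finset.mem_image_of_mem _ hW), hKW, hSW⟩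
  · obtain ⟨W, hW, hKW, hSW⟩ := hsep₁.exists_insert hK hS hKS hvS
    exact ⟨_, Finset.mem_union_left _ (Finset.mem_image_of_mem _ hW), hKW, hSW⟩
end

section
/- Let G be a finite simple graph whose vertex set admits a partition (B₁, A₁, C, A₂, B₂) forming an amalgam split, i.e.: A₁ and A₂ are nonempty, |A₁ ∪ B₁| ≥ 2, |A₂ ∪ B₂| ≥ 2, C is a clique, C is complete to A₁ ∪ A₂, A₁ is complete to A₂, B₁ is anticomplete to A₂ ∪ B₂, and B₂ is anticomplete to A₁ ∪ B₁. Pick any a₁ ∈ A₁ and a₂ ∈ A₂. If G[B₁ ∪ A₁ ∪ C ∪ {a₂}] admits a CS-separator of size f₁ and G[{a₁} ∪ C ∪ A₂ ∪ B₂] admits a CS-separator of size f₂, then G admits a CS-separator of size at most f₁ + f₂. -/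
open SimpleGraph

variable {V : Type*}

lemma side_aux [DecidableEq V] (G : SimpleGraph V) (B₁ A₁ C A₂ : Set V) (a₂ : V) (ha₂ : a₂ ∈ A₂)
    (hdB : Disjoint B₁ A₂) (hdA : Disjoint A₁ A₂) (hdC : Disjoint C A₂)
    (hCa₂ : ∀ c ∈ C, G.Adj c a₂)
    (hA₁a₂ : ∀ a ∈ A₁, G.Adj a a₂)
    (hB₁A₂ : ∀ b ∈ B₁, ∀ u ∈ A₂, ¬ G.Adj b u)
    (hA₁A₂ : ∀ a ∈ A₁, ∀ b ∈ A₂, G.Adj a b)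
    (hCA₂ : ∀ c ∈ C, ∀ a ∈ A₂, G.Adj c a)
    (𝒞₁ : Finset (Finset V)) (hsep : IsCSSeparatorOn G (B₁ ∪ A₁ ∪ C ∪ {a₂}) 𝒞₁)
    (A₂' : Finset V) (hA₂' : ∀ x, x ∈ A₂' ↔ x ∈ A₂)
    (K S : Finset V) (hclK : G.IsClique (K : Set V)) (hstS : IsStableSet G (S : Set V))
    (hKS : Disjoint K S)
    (hKsub : ∀ x ∈ K, x ∈ B₁ ∪ A₁ ∪ C ∪ A₂)
    (hnot : ¬ ((∃ x ∈ K, x ∈ A₂) ∧ (∃ x ∈ S, x ∈ A₂))) :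
    ∃ W ∈ 𝒞₁, K ⊆ (if a₂ ∈ W then W ∪ A₂' else W) ∧
      Disjoint S (if a₂ ∈ W then W ∪ A₂' else W) := by
  classical
  obtain ⟨hW𝒞, hmain⟩ := hsep
  have ha₂B₁ : a₂ ∉ B₁ := fun h => Set.disjoint_left.mp hdB h ha₂
  have ha₂A₁ : a₂ ∉ A₁ := fun h => Set.disjoint_left.mp hdA h ha₂
  have ha₂C : a₂ ∉ C := fun h => Set.disjoint_left.mp hdC h ha₂
  set Kf : Finset V := K.filter (fun v => v ∈ B₁ ∪ A₁ ∪ C) with hKf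
  set Sf : Finset V := S.filter (fun v => v ∈ B₁ ∪ A₁ ∪ C) with hSf
  set K' : Finset V := if (∃ x ∈ K, x ∈ A₂) then Kf ∪ {a₂} else Kf with hK'
  set S' : Finset V := if (∃ x ∈ S, x ∈ A₂) then Sf ∪ {a₂} else Sf with hS'
  have hKfmem : ∀ x, x ∈ Kf ↔ x ∈ K ∧ x ∈ B₁ ∪ A₁ ∪ C := by
    intro x; simp [hKf, Finset.mem_filter]
  have hSfmem : ∀ x, x ∈ Sf ↔ x ∈ S ∧ x ∈ B₁ ∪ A₁ ∪ C := by
    intro x; simp [hSf, Finset.mem_filter]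
  have hK'mem : ∀ x, x ∈ K' → (x ∈ K ∧ x ∈ B₁ ∪ A₁ ∪ C) ∨ (x = a₂ ∧ ∃ z ∈ K, z ∈ A₂) := by
    intro x hx
    rw [hK'] at hx
    split_ifs at hx with h
    · rcases Finset.mem_union.mp hx with h' | h'
      · exact Or.inl ((hKfmem x).mp h')
      · exact Or.inr ⟨Finset.mem_singleton.mp h', h⟩
    · exact Or.inl ((hKfmem x).mp hx)
  have hS'mem : ∀ x, x ∈ S' → (x ∈ S ∧ x ∈ B₁ ∪ A₁ ∪ C) ∨ (x = a₂ ∧ ∃ z ∈ S, z ∈ A₂) := by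
    intro x hx
    rw [hS'] at hx
    split_ifs at hx with h
    · rcases Finset.mem_union.mp hx with h' | h'
      · exact Or.inl ((hSfmem x).mp h')
      · exact Or.inr ⟨Finset.mem_singleton.mp h', h⟩
    · exact Or.inl ((hSfmem x).mp hx)
  -- if K meets A₂ then K avoids B₁
  have hKB₁ : (∃ z ∈ K, z ∈ A₂) → ∀ x ∈ K, x ∉ B₁ := by
    rintro ⟨z, hzK, hzA₂⟩ x hxK hxB₁
    have hne : x ≠ z := fun h => Set.disjoint_left.mp hdB hxB₁ (h ▸ hzA₂)
    exact hB₁A₂ x hxB₁ z hzA₂ (hclK (Finset.mem_coe.mpr hxK) (Finset.mem_coe.mpr hzK) hne)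
  -- if S meets A₂ then S avoids A₁ and C
  have hSA₁C : (∃ z ∈ S, z ∈ A₂) → ∀ x ∈ S, x ∉ A₁ ∧ x ∉ C := by
    rintro ⟨z, hzS, hzA₂⟩ x hxS
    constructor
    · intro hxA₁
      have hne : x ≠ z := fun h => Set.disjoint_left.mp hdA hxA₁ (h ▸ hzA₂)
      exact hstS (Finset.mem_coe.mpr hxS) (Finset.mem_coe.mpr hzS) hne
        (hA₁A₂ x hxA₁ z hzA₂)
    · intro hxC
      have hne : x ≠ z := fun h => Set.disjoint_left.mp hdC hxC (h ▸ hzA₂)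
      exact hstS (Finset.mem_coe.mpr hxS) (Finset.mem_coe.mpr hzS) hne
        (hCA₂ x hxC z hzA₂)
  -- subset conditions
  have hK'sub : (K' : Set V) ⊆ B₁ ∪ A₁ ∪ C ∪ {a₂} := by
    intro x hx
    rcases hK'mem x (Finset.mem_coe.mp hx) with ⟨-, h⟩ | ⟨h, -⟩
    · exact Set.mem_union_left _ h
    · exact Set.mem_union_right _ (h ▸ rfl)
  have hS'sub : (S' : Set V) ⊆ B₁ ∪ A₁ ∪ C ∪ {a₂} := by
    intro x hx
    rcases hS'mem x (Finset.mem_coe.mp hx) with ⟨-, h⟩ | ⟨h, -⟩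
    · exact Set.mem_union_left _ h
    · exact Set.mem_union_right _ (h ▸ rfl)
  -- K' is a clique
  have hclK' : G.IsClique (K' : Set V) := by
    intro x hx y hy hxy
    rcases hK'mem x (Finset.mem_coe.mp hx) with ⟨hxK, hxP⟩ | ⟨hxe, hKmeets⟩ <;>
      rcases hK'mem y (Finset.mem_coe.mp hy) with ⟨hyK, hyP⟩ | ⟨hye, hKmeets'⟩
    · exact hclK (Finset.mem_coe.mpr hxK) (Finset.mem_coe.mpr hyK) hxy
    · have hxB₁ : x ∉ B₁ := hKB₁ hKmeets' x hxK
      rw [hye]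
      rcases hxP with (h | h) | h
      · exact absurd h hxB₁
      · exact hA₁a₂ x h
      · exact hCa₂ x h
    · have hyB₁ : y ∉ B₁ := hKB₁ hKmeets y hyK
      rw [hxe]
      rcases hyP with (h | h) | h
      · exact absurd h hyB₁
      · exact (hA₁a₂ y h).symm
      · exact (hCa₂ y h).symm
    · exact absurd (hxe.trans hye.symm) hxy
  -- S' is stable
  have hstS' : IsStableSet G (S' : Set V) := by
    intro x hx y hy hxy
    rcases hS'mem x (Finset.mem_coe.mp hx) with ⟨hxS, hxP⟩ | ⟨hxe, hSmeets⟩ <;>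
      rcases hS'mem y (Finset.mem_coe.mp hy) with ⟨hyS, hyP⟩ | ⟨hye, hSmeets'⟩
    · exact hstS (Finset.mem_coe.mpr hxS) (Finset.mem_coe.mpr hyS) hxy
    · obtain ⟨hxA₁, hxC⟩ := hSA₁C hSmeets' x hxS
      have hxB₁ : x ∈ B₁ := by
        rcases hxP with (h | h) | h
        · exact h
        · exact absurd h hxA₁
        · exact absurd h hxC
      intro hadj
      rw [hye] at hadj
      exact hB₁A₂ x hxB₁ a₂ ha₂ hadj
    · obtain ⟨hyA₁, hyC⟩ := hSA₁C hSmeets y hyS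
      have hyB₁ : y ∈ B₁ := by
        rcases hyP with (h | h) | h
        · exact h
        · exact absurd h hyA₁
        · exact absurd h hyC
      intro hadj
      rw [hxe] at hadj
      exact hB₁A₂ y hyB₁ a₂ ha₂ hadj.symm
    · exact absurd (hxe.trans hye.symm) hxy
  -- K' and S' are disjoint
  have hdKS' : Disjoint K' S' := by
    rw [Finset.disjoint_left]
    intro x hxK' hxS'
    rcases hK'mem x hxK' with ⟨hxK, hPK⟩ | ⟨hxe, hKmeets⟩ <;>
      rcases hS'mem x hxS' with ⟨hxS, hPS⟩ | ⟨hxe', hSmeets⟩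
    · exact Finset.disjoint_left.mp hKS hxK hxS
    · rw [hxe'] at hPK
      rcases hPK with (h | h) | h
      · exact ha₂B₁ h
      · exact ha₂A₁ h
      · exact ha₂C h
    · rw [hxe] at hPS
      rcases hPS with (h | h) | h
      · exact ha₂B₁ h
      · exact ha₂A₁ h
      · exact ha₂C h
    · exact hnot ⟨hKmeets, hSmeets⟩
  obtain ⟨W, hW, hKW, hSW⟩ := hmain K' S' hK'sub hS'sub hclK' hstS' hdKS'
  refine ⟨W, hW, ?_, ?_⟩
  · -- K ⊆ if ...
    split_ifs with haW
    · intro x hxK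
      by_cases hxA₂ : x ∈ A₂
      · exact Finset.mem_union_right _ ((hA₂' x).mpr hxA₂)
      · refine Finset.mem_union_left _ (hKW ?_)
        have hxP : x ∈ B₁ ∪ A₁ ∪ C := by
          rcases hKsub x hxK with h | h
          · exact h
          · exact absurd h hxA₂
        rw [hK']
        split_ifs with h
        · exact Finset.mem_union_left _ ((hKfmem x).mpr ⟨hxK, hxP⟩)
        · exact (hKfmem x).mpr ⟨hxK, hxP⟩
    · intro x hxK
      by_cases hxA₂ : x ∈ A₂
      · exfalso
        apply haW
        apply hKW
        rw [hK']
        rw [if_pos ⟨x, hxK, hxA₂⟩]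
        exact Finset.mem_union_right _ (Finset.mem_singleton_self a₂)
      · apply hKW
        have hxP : x ∈ B₁ ∪ A₁ ∪ C := by
          rcases hKsub x hxK with h | h
          · exact h
          · exact absurd h hxA₂
        rw [hK']
        split_ifs with h
        · exact Finset.mem_union_left _ ((hKfmem x).mpr ⟨hxK, hxP⟩)
        · exact (hKfmem x).mpr ⟨hxK, hxP⟩
  · -- Disjoint S (if ...)
    have key : ∀ x ∈ S, x ∉ W := by
      intro x hxS hxW
      have hxP := hW𝒞 W hW (Finset.mem_coe.mpr hxW)
      have hxS' : x ∈ S' := by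
        rcases hxP with h | h
        · rw [hS']
          split_ifs with hh
          · exact Finset.mem_union_left _ ((hSfmem x).mpr ⟨hxS, h⟩)
          · exact (hSfmem x).mpr ⟨hxS, h⟩
        · have hxe : x = a₂ := h
          subst hxe
          rw [hS', if_pos ⟨x, hxS, ha₂⟩]
          exact Finset.mem_union_right _ (Finset.mem_singleton_self x)
      exact Finset.disjoint_left.mp hSW hxS' hxW
    split_ifs with haW
    · rw [Finset.disjoint_left]
      intro x hxS hx
      rcases Finset.mem_union.mp hx with h | h
      · exact key x hxS h
      · -- x ∈ A₂', so S meets A₂, so a₂ ∈ S', contradiction with a₂ ∈ W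
        have hxA₂ : x ∈ A₂ := (hA₂' x).mp h
        have : a₂ ∈ S' := by
          rw [hS', if_pos ⟨x, hxS, hxA₂⟩]
          exact Finset.mem_union_right _ (Finset.mem_singleton_self a₂)
        exact Finset.disjoint_left.mp hSW this haW
    · rw [Finset.disjoint_left]
      intro x hxS hxW
      exact key x hxS hxW

/-- amalgam decomposition is valid. -/
theorem stmt_6 [Finite V] (G : SimpleGraph V) (B₁ A₁ C A₂ B₂ : Set V)
    (hpart : B₁ ∪ A₁ ∪ C ∪ A₂ ∪ B₂ = Set.univ)
    (hdisj : List.Pairwise Disjoint [B₁, A₁, C, A₂, B₂])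
    (hA₁ : A₁.Nonempty) (hA₂ : A₂.Nonempty)
    (hcard₁ : 2 ≤ (A₁ ∪ B₁).ncard) (hcard₂ : 2 ≤ (A₂ ∪ B₂).ncard)
    (hC : G.IsClique C)
    (hCcomp : ∀ c ∈ C, ∀ a ∈ A₁ ∪ A₂, G.Adj c a)
    (hA₁A₂ : ∀ a ∈ A₁, ∀ b ∈ A₂, G.Adj a b)
    (hB₁anti : ∀ b ∈ B₁, ∀ u ∈ A₂ ∪ B₂, ¬ G.Adj b u)
    (hB₂anti : ∀ b ∈ B₂, ∀ u ∈ A₁ ∪ B₁, ¬ G.Adj b u)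
    (a₁ : V) (ha₁ : a₁ ∈ A₁) (a₂ : V) (ha₂ : a₂ ∈ A₂)
    (f₁ f₂ : ℕ)
    (h₁ : HasCSSepOn G (B₁ ∪ A₁ ∪ C ∪ {a₂}) f₁)
    (h₂ : HasCSSepOn G ({a₁} ∪ C ∪ A₂ ∪ B₂) f₂) :
    HasCSSepOn G Set.univ (f₁ + f₂) := by
  classical
  haveI := Fintype.ofFinite V
  obtain ⟨𝒞₁, hc₁, hsep₁⟩ := h₁
  obtain ⟨𝒞₂, hc₂, hsep₂⟩ := h₂
  -- extract disjointness facts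
  rcases hdisj with _ | ⟨hB₁d, hdisj⟩
  rcases hdisj with _ | ⟨hA₁d, hdisj⟩
  rcases hdisj with _ | ⟨hCd, hdisj⟩
  rcases hdisj with _ | ⟨hA₂d, -⟩
  have dB₁A₁ : Disjoint B₁ A₁ := hB₁d A₁ (by simp)
  have dB₁C : Disjoint B₁ C := hB₁d C (by simp)
  have dB₁A₂ : Disjoint B₁ A₂ := hB₁d A₂ (by simp)
  have dB₁B₂ : Disjoint B₁ B₂ := hB₁d B₂ (by simp)
  have dA₁C : Disjoint A₁ C := hA₁d C (by simp)
  have dA₁A₂ : Disjoint A₁ A₂ := hA₁d A₂ (by simp)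
  have dA₁B₂ : Disjoint A₁ B₂ := hA₁d B₂ (by simp)
  have dCA₂ : Disjoint C A₂ := hCd A₂ (by simp)
  have dCB₂ : Disjoint C B₂ := hCd B₂ (by simp)
  have dA₂B₂ : Disjoint A₂ B₂ := hA₂d B₂ (by simp)
  -- rewrite the second separator set
  have hset₂ : ({a₁} ∪ C ∪ A₂ ∪ B₂ : Set V) = B₂ ∪ A₂ ∪ C ∪ {a₁} := by
    ext x; simp only [Set.mem_union]; tauto
  rw [hset₂] at hsep₂
  set A₁' : Finset V := A₁.toFinset with hA₁'def
  set A₂' : Finset V := A₂.toFinset with hA₂'def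
  have hA₁'mem : ∀ x, x ∈ A₁' ↔ x ∈ A₁ := fun x => Set.mem_toFinset
  have hA₂'mem : ∀ x, x ∈ A₂' ↔ x ∈ A₂ := fun x => Set.mem_toFinset
  set F₁ : Finset V → Finset V := fun W => if a₂ ∈ W then W ∪ A₂' else W with hF₁
  set F₂ : Finset V → Finset V := fun W => if a₁ ∈ W then W ∪ A₁' else W with hF₂
  refine ⟨𝒞₁.image F₁ ∪ 𝒞₂.image F₂, ?_, ?_, ?_⟩
  · calc (𝒞₁.image F₁ ∪ 𝒞₂.image F₂).card ≤ (𝒞₁.image F₁).card + (𝒞₂.image F₂).card :=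
        Finset.card_union_le _ _
      _ ≤ f₁ + f₂ := add_le_add (Finset.card_image_le.trans hc₁)
        (Finset.card_image_le.trans hc₂)
  · intro W _
    exact Set.subset_univ _
  · intro K S _ _ hclK hstS hKS
    have hmem : ∀ v : V, v ∈ B₁ ∨ v ∈ A₁ ∨ v ∈ C ∨ v ∈ A₂ ∨ v ∈ B₂ := by
      intro v
      have hv : v ∈ (B₁ ∪ A₁ ∪ C ∪ A₂ ∪ B₂ : Set V) := hpart ▸ Set.mem_univ v
      simp only [Set.mem_union] at hv
      tauto
    by_cases hKB₂ : ∃ x ∈ K, x ∈ B₂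
    · -- side 2
      obtain ⟨b, hbK, hbB₂⟩ := hKB₂
      have hKsub : ∀ x ∈ K, x ∈ B₂ ∪ A₂ ∪ C ∪ A₁ := by
        intro x hxK
        have hxB₁ : x ∉ B₁ := by
          intro hxB₁
          have hne : b ≠ x := fun h => Set.disjoint_left.mp dB₁B₂ hxB₁ (h ▸ hbB₂)
          exact hB₂anti b hbB₂ x (Or.inr hxB₁)
            (hclK (Finset.mem_coe.mpr hbK) (Finset.mem_coe.mpr hxK) hne)
        have h5 := hmem x
        simp only [Set.mem_union]
        tauto
      have hnot : ¬ ((∃ x ∈ K, x ∈ A₁) ∧ (∃ x ∈ S, x ∈ A₁)) := by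
        rintro ⟨⟨x, hxK, hxA₁⟩, -⟩
        have hne : b ≠ x := fun h => Set.disjoint_left.mp dA₁B₂ hxA₁ (h ▸ hbB₂)
        exact hB₂anti b hbB₂ x (Or.inl hxA₁)
          (hclK (Finset.mem_coe.mpr hbK) (Finset.mem_coe.mpr hxK) hne)
      obtain ⟨W, hW, h1, h2⟩ := side_aux G B₂ A₂ C A₁ a₁ ha₁
        dA₁B₂.symm dA₁A₂.symm dA₁C.symm
        (fun c hc => hCcomp c hc a₁ (Or.inl ha₁))
        (fun a haA₂ => (hA₁A₂ a₁ ha₁ a haA₂).symm)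
        (fun b hb u hu => hB₂anti b hb u (Or.inl hu))
        (fun a haA₂ b hbA₁ => (hA₁A₂ b hbA₁ a haA₂).symm)
        (fun c hc a ha => hCcomp c hc a (Or.inl ha))
        𝒞₂ hsep₂ A₁' hA₁'mem K S hclK hstS hKS hKsub hnot
      exact ⟨F₂ W, Finset.mem_union_right _ (Finset.mem_image_of_mem F₂ hW), h1, h2⟩
    · by_cases hmix : (∃ x ∈ K, x ∈ A₂) ∧ (∃ x ∈ S, x ∈ A₂)
      · -- side 2 again
        obtain ⟨⟨z, hzK, hzA₂⟩, ⟨w, hwS, hwA₂⟩⟩ := hmix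
        have hKsub : ∀ x ∈ K, x ∈ B₂ ∪ A₂ ∪ C ∪ A₁ := by
          intro x hxK
          have hxB₁ : x ∉ B₁ := by
            intro hxB₁
            have hne : x ≠ z := fun h => Set.disjoint_left.mp dB₁A₂ hxB₁ (h ▸ hzA₂)
            exact hB₁anti x hxB₁ z (Or.inl hzA₂)
              (hclK (Finset.mem_coe.mpr hxK) (Finset.mem_coe.mpr hzK) hne)
          have h5 := hmem x
          simp only [Set.mem_union]
          tauto
        have hnot : ¬ ((∃ x ∈ K, x ∈ A₁) ∧ (∃ x ∈ S, x ∈ A₁)) := by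
          rintro ⟨-, ⟨y, hyS, hyA₁⟩⟩
          have hne : y ≠ w := fun h => Set.disjoint_left.mp dA₁A₂ hyA₁ (h ▸ hwA₂)
          exact hstS (Finset.mem_coe.mpr hyS) (Finset.mem_coe.mpr hwS) hne
            (hA₁A₂ y hyA₁ w hwA₂)
        obtain ⟨W, hW, h1, h2⟩ := side_aux G B₂ A₂ C A₁ a₁ ha₁
          dA₁B₂.symm dA₁A₂.symm dA₁C.symm
          (fun c hc => hCcomp c hc a₁ (Or.inl ha₁))
          (fun a haA₂ => (hA₁A₂ a₁ ha₁ a haA₂).symm)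
          (fun b hb u hu => hB₂anti b hb u (Or.inl hu))
          (fun a haA₂ b hbA₁ => (hA₁A₂ b hbA₁ a haA₂).symm)
          (fun c hc a ha => hCcomp c hc a (Or.inl ha))
          𝒞₂ hsep₂ A₁' hA₁'mem K S hclK hstS hKS hKsub hnot
        exact ⟨F₂ W, Finset.mem_union_right _ (Finset.mem_image_of_mem F₂ hW), h1, h2⟩
      · -- side 1
        have hKsub : ∀ x ∈ K, x ∈ B₁ ∪ A₁ ∪ C ∪ A₂ := by
          intro x hxK
          have hxB₂ : x ∉ B₂ := fun h => hKB₂ ⟨x, hxK, h⟩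
          have h5 := hmem x
          simp only [Set.mem_union]
          tauto
        obtain ⟨W, hW, h1, h2⟩ := side_aux G B₁ A₁ C A₂ a₂ ha₂
          dB₁A₂ dA₁A₂ dCA₂
          (fun c hc => hCcomp c hc a₂ (Or.inr ha₂))
          (fun a haA₁ => hA₁A₂ a haA₁ a₂ ha₂)
          (fun b hb u hu => hB₁anti b hb u (Or.inl hu))
          hA₁A₂
          (fun c hc a ha => hCcomp c hc a (Or.inr ha))
          𝒞₁ hsep₁ A₂' hA₂'mem K S hclK hstS hKS hKsub hmix
        exact ⟨F₁ W, Finset.mem_union_left _ (Finset.mem_image_of_mem F₁ hW), h1, h2⟩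
end

section
/- For every constant s > 0 there exist constants K and c such that the following holds: every finite simple graph G on n ≥ 2 vertices that admits an ordering v₁, …, vₙ of its vertices with |N(vᵢ) ∩ {v_{i+1}, …, vₙ}| ≤ n^{s/√(log n)} for every i ∈ {1, …, n−1} admits a CS-separator of size at most K·n^c. -/
open SimpleGraph

variable {V : Type*}

def g : ℕ → ℕ
  | 0 => 2
  | 1 => 2
  | m + 2 => 2 + 2 * (m + 2) * g ((m + 3) / 2)
decreasing_by omega


lemma lemA (G : SimpleGraph V) (M : ℕ) : ∀ A : Finset V, A.card ≤ M → HasCSSepOn G ↑A (g M) := by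
  induction M using Nat.strong_induction_on with
  | _ M IH =>
  intro A hA
  classical
  rcases M with _ | M
  case zero =>
    -- base: card ≤ 0
    refine ⟨{∅, A}, ?_, ?_, ?_⟩
    · calc ({∅, A} : Finset (Finset V)).card ≤ 2 := Finset.card_le_two
        _ = g 0 := by simp [g]
    · intro W hW
      simp only [Finset.mem_insert, Finset.mem_singleton] at hW
      rcases hW with rfl | rfl
      · simp
      · exact subset_rfl
    · intro K S hK hS _ _ hdis
      refine ⟨∅, by simp, ?_, Finset.disjoint_empty_right _⟩
      have : A = ∅ := Finset.card_eq_zero.mp (Nat.le_zero.mp hA)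
      subst this
      intro x hx
      exact absurd (hK hx) (by simp)
  rcases M with _ | m
  case succ.zero =>
    refine ⟨{∅, A}, ?_, ?_, ?_⟩
    · calc ({∅, A} : Finset (Finset V)).card ≤ 2 := Finset.card_le_two
        _ = g 1 := by simp [g]
    · intro W hW
      simp only [Finset.mem_insert, Finset.mem_singleton] at hW
      rcases hW with rfl | rfl
      · simp
      · exact subset_rfl
    · intro K S hK hS _ _ hdis
      rcases K.eq_empty_or_nonempty with rfl | ⟨a, ha⟩
      · exact ⟨∅, by simp, by simp, Finset.disjoint_empty_right _⟩
      · have haA : a ∈ A := by exact_mod_cast hK ha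
        refine ⟨A, by simp, by exact_mod_cast hK, ?_⟩
        rw [Finset.disjoint_left]
        intro x hxS hxA
        have hx2 : x ∈ A := hxA
        have : x = a := by
          have := Finset.card_le_one.mp hA x hx2 a haA
          exact this
        subst this
        exact Finset.disjoint_left.mp hdis ha hxS
  case succ.succ =>
  -- main case: M = m + 2
  set N := A.card with hN
  set dA : V → ℕ := fun v => (A.filter (fun x => G.Adj v x)).card with hdA
  set lowP : V → Prop := fun v => 2 * dA v < N with hlowP
  set B : V → Finset V := fun v =>
    if lowP v then insert v (A.filter (fun x => G.Adj v x))
    else A.filter (fun x => x ≠ v ∧ ¬ G.Adj v x) with hB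
  have hBcard : ∀ v, (B v).card ≤ (m + 3) / 2 := by
    intro v
    by_cases hv : lowP v
    · have h1 : (B v).card ≤ dA v + 1 := by
        rw [hB]; simp only [if_pos hv]
        exact Finset.card_insert_le _ _
      have h2 : 2 * dA v < N := hv
      omega
    · have hsub : B v ⊆ A \ (A.filter (fun x => G.Adj v x)) := by
        rw [hB]; simp only [if_neg hv]
        intro x hx
        simp only [Finset.mem_filter] at hx
        simp only [Finset.mem_sdiff, Finset.mem_filter]
        exact ⟨hx.1, fun h => hx.2.2 h.2⟩
      have h1 : (B v).card ≤ N - dA v := by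
        calc (B v).card ≤ (A \ (A.filter (fun x => G.Adj v x))).card := Finset.card_le_card hsub
          _ = N - dA v := by
            rw [Finset.card_sdiff_of_subset (Finset.filter_subset _ _)]
      have h2 : ¬ 2 * dA v < N := hv
      omega
  have hhalf : (m + 3) / 2 < m + 2 := by omega
  have hIH : ∀ v : V, HasCSSepOn G ↑(B v) (g ((m + 3) / 2)) :=
    fun v => IH _ hhalf (B v) (hBcard v)
  choose 𝒟 h𝒟card h𝒟sep using hIH
  set F : V → Finset (Finset V) := fun v =>
    if lowP v then 𝒟 v
    else (𝒟 v).image (fun W => (A.filter (fun x => G.Adj v x)) ∪ W) with hF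
  set H : Finset V := A.filter (fun v => ¬ lowP v) with hH
  refine ⟨insert ∅ (insert H (A.biUnion F)), ?_, ?_, ?_⟩
  · -- cardinality
    have hFcard : ∀ v ∈ A, (F v).card ≤ g ((m + 3) / 2) := by
      intro v _
      rw [hF]
      by_cases hv : lowP v
      · simp only [if_pos hv]; exact h𝒟card v
      · simp only [if_neg hv]
        exact le_trans (Finset.card_image_le) (h𝒟card v)
    have h1 : (A.biUnion F).card ≤ N * g ((m + 3) / 2) := by
      calc (A.biUnion F).card ≤ ∑ v ∈ A, (F v).card := Finset.card_biUnion_le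
        _ ≤ ∑ _v ∈ A, g ((m + 3) / 2) := Finset.sum_le_sum hFcard
        _ = N * g ((m + 3) / 2) := by rw [Finset.sum_const, smul_eq_mul]
    have hgeq : g (m + 2) = 2 + 2 * (m + 2) * g ((m + 3) / 2) := by rw [g]
    have h2 : N ≤ m + 2 := hA
    calc (insert ∅ (insert H (A.biUnion F))).card
        ≤ (insert H (A.biUnion F)).card + 1 := Finset.card_insert_le _ _
      _ ≤ ((A.biUnion F).card + 1) + 1 := by
          exact Nat.add_le_add_right (Finset.card_insert_le _ _) 1
      _ ≤ (N * g ((m + 3) / 2) + 1) + 1 := by omega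
      _ ≤ g (m + 2) := by
          rw [hgeq]
          have h3 : N * g ((m + 3) / 2) ≤ (m + 2) * g ((m + 3) / 2) :=
            Nat.mul_le_mul_right _ h2
          have h5 : 2 + 2 * (m + 2) * g ((m + 3) / 2)
              = 2 + (m + 2) * g ((m + 3) / 2) + (m + 2) * g ((m + 3) / 2) := by ring
          omega
  · -- all members are subsets of A
    intro W hW
    simp only [Finset.mem_insert] at hW
    rcases hW with rfl | rfl | hW
    · simp
    · rw [hH]; exact_mod_cast Finset.filter_subset _ _
    · rw [Finset.mem_biUnion] at hW
      obtain ⟨v, hvA, hWF⟩ := hW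
      have hBvA : (B v : Set V) ⊆ ↑A := by
        rw [hB]
        by_cases hv : lowP v
        · simp only [if_pos hv]
          intro x hx
          simp only [Finset.coe_insert, Set.mem_insert_iff] at hx
          rcases hx with rfl | hx
          · exact hvA
          · have := Finset.mem_coe.mp hx
            exact (Finset.filter_subset _ _) this
        · simp only [if_neg hv]
          exact_mod_cast Finset.filter_subset _ _
      by_cases hv : lowP v
      · simp only [hF, if_pos hv] at hWF
        exact subset_trans ((h𝒟sep v).1 W hWF) hBvA
      · simp only [hF, if_neg hv, Finset.mem_image] at hWF
        obtain ⟨W', hW', rfl⟩ := hWF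
        intro x hx
        rw [Finset.coe_union, Set.mem_union] at hx
        rcases hx with hx | hx
        · exact (Finset.filter_subset _ _) (Finset.mem_coe.mp hx)
        · exact hBvA ((h𝒟sep v).1 W' hW' hx)
  · -- separation
    intro K S hK hS hcl hst hdis
    by_cases hc1 : ∃ w ∈ K, lowP w
    · obtain ⟨w, hwK, hlow⟩ := hc1
      have hwA : w ∈ A := by exact_mod_cast hK hwK
      have hBw : B w = insert w (A.filter (fun x => G.Adj w x)) := by
        rw [hB]; simp only [if_pos hlow]
      have hKB : (K : Set V) ⊆ ↑(B w) := by
        intro k hk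
        rw [hBw]
        simp only [Finset.coe_insert, Set.mem_insert_iff, Finset.coe_filter, Set.mem_setOf_eq]
        by_cases hkw : k = w
        · exact Or.inl hkw
        · refine Or.inr ⟨by exact_mod_cast hK hk, ?_⟩
          exact hcl (hwK) (hk) (fun h => hkw (h.symm))
      set S' := S ∩ B w with hS'
      obtain ⟨W, hW𝒟, hKW, hSW⟩ := (h𝒟sep w).2 K S' hKB
        (by intro x hx
            rw [hS'] at hx
            exact_mod_cast (Finset.inter_subset_right (Finset.mem_coe.mp hx)))
        hcl
        (by refine Set.Pairwise.mono ?_ hst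
            intro x hx
            rw [hS'] at hx
            exact_mod_cast Finset.inter_subset_left (Finset.mem_coe.mp hx))
        (Finset.disjoint_of_subset_right Finset.inter_subset_left hdis)
      refine ⟨W, ?_, hKW, ?_⟩
      · simp only [Finset.mem_insert]
        refine Or.inr (Or.inr ?_)
        rw [Finset.mem_biUnion]
        exact ⟨w, hwA, by simp only [hF, if_pos hlow]; exact hW𝒟⟩
      · rw [Finset.disjoint_left]
        intro x hxS hxW
        have hxB : x ∈ B w := by
          have := (h𝒟sep w).1 W hW𝒟 (Finset.mem_coe.mpr hxW)
          exact_mod_cast this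
        have hxS' : x ∈ S' := Finset.mem_inter.mpr ⟨hxS, hxB⟩
        exact Finset.disjoint_left.mp hSW hxS' hxW
    · by_cases hc2 : ∃ u ∈ S, ¬ lowP u
      · obtain ⟨u, huS, hhigh⟩ := hc2
        have huA : u ∈ A := by exact_mod_cast hS huS
        have hBu : B u = A.filter (fun x => x ≠ u ∧ ¬ G.Adj u x) := by
          rw [hB]; simp only [if_neg hhigh]
        set Nu := A.filter (fun x => G.Adj u x) with hNu
        set K' := K ∩ B u with hK'
        set S' := S ∩ B u with hS'
        obtain ⟨W', hW'𝒟, hK'W', hS'W'⟩ := (h𝒟sep u).2 K' S'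
          (by intro x hx
              rw [hK'] at hx
              exact_mod_cast Finset.inter_subset_right (Finset.mem_coe.mp hx))
          (by intro x hx
              rw [hS'] at hx
              exact_mod_cast Finset.inter_subset_right (Finset.mem_coe.mp hx))
          (hcl.subset (by exact_mod_cast (Finset.inter_subset_left : K' ⊆ K)))
          (by refine Set.Pairwise.mono ?_ hst
              intro x hx
              rw [hS'] at hx
              exact_mod_cast Finset.inter_subset_left (Finset.mem_coe.mp hx))
          (Finset.disjoint_of_subset_left Finset.inter_subset_left
            (Finset.disjoint_of_subset_right Finset.inter_subset_left hdis))
        refine ⟨Nu ∪ W', ?_, ?_, ?_⟩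
        · simp only [Finset.mem_insert]
          refine Or.inr (Or.inr ?_)
          rw [Finset.mem_biUnion]
          refine ⟨u, huA, ?_⟩
          simp only [hF, if_neg hhigh, Finset.mem_image]
          exact ⟨W', hW'𝒟, rfl⟩
        · -- K ⊆ Nu ∪ W'
          intro k hkK
          have hkA : k ∈ A := by exact_mod_cast hK (Finset.mem_coe.mpr hkK)
          have hku : k ≠ u := by
            intro h; subst h
            exact Finset.disjoint_left.mp hdis hkK huS
          by_cases hadj : G.Adj u k
          · exact Finset.mem_union_left _ (Finset.mem_filter.mpr ⟨hkA, hadj⟩)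
          · have hkB : k ∈ B u := by
              rw [hBu, Finset.mem_filter]
              exact ⟨hkA, hku, hadj⟩
            exact Finset.mem_union_right _ (hK'W' (Finset.mem_inter.mpr ⟨hkK, hkB⟩))
        · -- Disjoint S (Nu ∪ W')
          rw [Finset.disjoint_left]
          intro x hxS hxW
          rcases Finset.mem_union.mp hxW with hx | hx
          · have hadj : G.Adj u x := (Finset.mem_filter.mp hx).2
            have hne : u ≠ x := fun h => G.irrefl (h ▸ hadj)
            exact hst (Finset.mem_coe.mpr huS) (Finset.mem_coe.mpr hxS) hne hadj
          · have hxB : x ∈ B u := by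
              have := (h𝒟sep u).1 W' hW'𝒟 (Finset.mem_coe.mpr hx)
              exact_mod_cast this
            exact Finset.disjoint_left.mp hS'W' (Finset.mem_inter.mpr ⟨hxS, hxB⟩) hx
      · -- all of K high, all of S low
        push_neg at hc1 hc2
        refine ⟨H, by simp, ?_, ?_⟩
        · intro k hkK
          rw [hH, Finset.mem_filter]
          exact ⟨by exact_mod_cast hK (Finset.mem_coe.mpr hkK), hc1 k hkK⟩
        · rw [Finset.disjoint_left]
          intro x hxS hxH
          rw [hH, Finset.mem_filter] at hxH
          exact hxH.2 (hc2 x hxS)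

lemma log_threehalf : (1:ℝ)/5 ≤ Real.log (3/2) := by
  rw [Real.le_log_iff_exp_le (by norm_num : (0:ℝ) < 3/2)]
  have h1 : (1:ℝ) - 1/5 ≤ Real.exp (-(1/5)) := by
    have := Real.add_one_le_exp (-(1/5) : ℝ)
    linarith
  have h2 : Real.exp (1/5) * Real.exp (-(1/5)) = 1 := by
    rw [← Real.exp_add]; norm_num
  nlinarith [Real.exp_pos (1/5 : ℝ), Real.exp_pos (-(1/5) : ℝ)]

lemma exp_two_ge : (7:ℝ) ≤ Real.exp 2 := by
  have h1 : (2.7182818283 : ℝ) < Real.exp 1 := Real.exp_one_gt_d9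
  have h2 : Real.exp 2 = Real.exp 1 * Real.exp 1 := by
    rw [← Real.exp_add]; norm_num
  nlinarith

lemma exp_two_le : Real.exp 2 ≤ (7.4:ℝ) := by
  have h1 : Real.exp 1 < 2.7182818286 := Real.exp_one_lt_d9
  have h2 : Real.exp 2 = Real.exp 1 * Real.exp 1 := by
    rw [← Real.exp_add]; norm_num
  nlinarith [Real.exp_pos (1:ℝ)]


lemma g_le (M : ℕ) : (g M : ℝ) ≤ 1200 * Real.exp (10 * (Real.log (M + 2))^2) := by
  induction M using Nat.strong_induction_on with
  | _ M IH =>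
  have hexp1 : (1:ℝ) ≤ Real.exp (10 * (Real.log ((M:ℝ) + 2))^2) := by
    rw [Real.one_le_exp_iff]
    positivity
  by_cases hM : M ≤ 6
  · have hb : g M ≤ 1200 := by interval_cases M <;> norm_num [g]
    calc (g M : ℝ) ≤ 1200 := by exact_mod_cast hb
      _ ≤ 1200 * Real.exp (10 * (Real.log ((M:ℝ) + 2))^2) := by nlinarith
  · push_neg at hM
    obtain ⟨m, rfl⟩ : ∃ m, M = m + 2 := ⟨M - 2, by omega⟩
    have hm : 5 ≤ m := by omega
    have hmR : (5:ℝ) ≤ (m:ℝ) := by exact_mod_cast hm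
    set h := (m + 3) / 2 with hh
    have hhlt : h < m + 2 := by omega
    have ihh := IH h hhlt
    have hcast : ((h : ℕ) : ℝ) ≤ ((m : ℝ) + 3) / 2 := by
      rw [hh]
      have := Nat.cast_div_le (m := m + 3) (n := 2) (α := ℝ)
      push_cast at this ⊢
      linarith
    set L := Real.log ((m : ℝ) + 4) with hLdef
    set L' := Real.log ((h : ℝ) + 2) with hL'def
    have hL2 : 2 ≤ L := by
      rw [hLdef, Real.le_log_iff_exp_le (by positivity : (0:ℝ) < (m:ℝ) + 4)]
      have := exp_two_le
      linarith
    have hL'0 : 0 ≤ L' := Real.log_nonneg (by have := Nat.cast_nonneg (α := ℝ) h; linarith)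
    have hL'le : L' ≤ L - 1/5 := by
      have hh4 : (h:ℝ) + 2 ≤ 2/3 * ((m:ℝ) + 4) := by linarith
      have h1 : L' ≤ Real.log (2/3 * ((m:ℝ) + 4)) :=
        Real.log_le_log (by positivity) hh4
      have h2 : Real.log (2/3 * ((m:ℝ) + 4)) = Real.log (2/3) + L := by
        rw [hLdef, ← Real.log_mul (by norm_num) (by positivity)]
      have h3 : Real.log ((2:ℝ)/3) = - Real.log (3/2) := by
        rw [← Real.log_inv]
        norm_num
      have := log_threehalf
      linarith
    -- the goal's log term equals L
    have hcoe : ((↑(m + 2) : ℝ) + 2) = (m : ℝ) + 4 := by push_cast; ring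
    rw [hcoe]
    have hgrec : (g (m + 2) : ℝ) = 2 + 2 * ((m:ℝ) + 2) * (g h : ℝ) := by
      rw [g]
      push_cast
      ring
    rw [hgrec]
    set X := Real.exp (10 * L'^2) with hXdef
    have hX1 : (1:ℝ) ≤ X := by
      rw [hXdef, Real.one_le_exp_iff]
      positivity
    have hgh : (g h : ℝ) ≤ 1200 * X := ihh
    have hq : 10 * L'^2 + (L + 2) ≤ 10 * L^2 := by nlinarith
    have hY : X * Real.exp (L + 2) ≤ Real.exp (10 * L^2) := by
      rw [hXdef, ← Real.exp_add]
      exact Real.exp_le_exp.mpr hq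
    have hexpL : Real.exp (L + 2) = ((m:ℝ) + 4) * Real.exp 2 := by
      rw [Real.exp_add, Real.exp_log (by positivity)]
    have hkey : 2 + 2 * ((m:ℝ) + 2) * (1200 * X) ≤ 1200 * (X * (((m:ℝ) + 4) * Real.exp 2)) := by
      nlinarith [exp_two_ge, mul_nonneg (mul_nonneg (by linarith : (0:ℝ) ≤ X)
        (by linarith : (0:ℝ) ≤ (m:ℝ) + 4)) (by linarith [exp_two_ge] : (0:ℝ) ≤ Real.exp 2 - 7)]
    calc 2 + 2 * ((m:ℝ) + 2) * (g h : ℝ)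
        ≤ 2 + 2 * ((m:ℝ) + 2) * (1200 * X) := by nlinarith
      _ ≤ 1200 * (X * (((m:ℝ) + 4) * Real.exp 2)) := hkey
      _ = 1200 * (X * Real.exp (L + 2)) := by rw [hexpL]
      _ ≤ 1200 * Real.exp (10 * L^2) := by nlinarith

lemma lemB {V : Type*} [Fintype V] (G : SimpleGraph V) (n : ℕ) (hn : n = Fintype.card V)
    (v : Fin n ≃ V) (d : ℕ)
    (hd : ∀ i : Fin n,
      {j : Fin n | i < j ∧ G.Adj (v i) (v j)}.ncard ≤ d) :
    HasCSSepOn G Set.univ (1 + n * g d) := by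
  classical
  set B : Fin n → Finset V := fun i =>
    (Finset.univ.filter fun j : Fin n => i < j ∧ G.Adj (v i) (v j)).image v with hBdef
  have hBcard : ∀ i, (B i).card ≤ d := by
    intro i
    refine le_trans Finset.card_image_le ?_
    have heq : (Finset.univ.filter fun j : Fin n => i < j ∧ G.Adj (v i) (v j)).card
        = {j : Fin n | i < j ∧ G.Adj (v i) (v j)}.ncard := by
      rw [← Set.ncard_coe_finset]
      congr 1
      ext j
      simp
    rw [heq]
    exact hd i
  have hsep : ∀ i, HasCSSepOn G ↑(B i) (g d) := fun i => lemA G d (B i) (hBcard i)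
  choose 𝒟 h𝒟card h𝒟sep using hsep
  refine ⟨insert ∅ (Finset.univ.biUnion fun i => (𝒟 i).image (insert (v i))), ?_, ?_, ?_⟩
  · calc (insert ∅ (Finset.univ.biUnion fun i => (𝒟 i).image (insert (v i)))).card
        ≤ (Finset.univ.biUnion fun i => (𝒟 i).image (insert (v i))).card + 1 :=
          Finset.card_insert_le _ _
      _ ≤ (∑ i : Fin n, ((𝒟 i).image (insert (v i))).card) + 1 := by
          exact Nat.add_le_add_right Finset.card_biUnion_le 1
      _ ≤ (∑ _i : Fin n, g d) + 1 := by
          refine Nat.add_le_add_right (Finset.sum_le_sum fun i _ => ?_) 1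
          exact le_trans Finset.card_image_le (h𝒟card i)
      _ = n * g d + 1 := by simp [Finset.sum_const, mul_comm]
      _ = 1 + n * g d := by ring
  · intro W _
    exact Set.subset_univ _
  · intro K S _ _ hcl hst hdis
    rcases K.eq_empty_or_nonempty with rfl | ⟨a, ha⟩
    · exact ⟨∅, Finset.mem_insert_self _ _, Finset.Subset.refl _, Finset.disjoint_empty_right _⟩
    · have hTne : (K.image v.symm).Nonempty := ⟨v.symm a, Finset.mem_image_of_mem _ ha⟩
      set i := (K.image v.symm).min' hTne with hi
      have hiK : v i ∈ K := by
        have : i ∈ K.image v.symm := Finset.min'_mem _ hTne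
        rw [Finset.mem_image] at this
        obtain ⟨k, hk, hki⟩ := this
        rw [← hki, Equiv.apply_symm_apply]
        exact hk
      have hmin : ∀ k ∈ K, i ≤ v.symm k := fun k hk =>
        Finset.min'_le _ _ (Finset.mem_image_of_mem _ hk)
      have hK'B : ((K.erase (v i) : Finset V) : Set V) ⊆ ↑(B i) := by
        intro k hk
        rw [Finset.mem_coe, Finset.mem_erase] at hk
        obtain ⟨hkne, hkK⟩ := hk
        have hlt : i < v.symm k := by
          refine lt_of_le_of_ne (hmin k hkK) ?_
          intro h
          exact hkne (by rw [h, Equiv.apply_symm_apply])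
        have hadj : G.Adj (v i) (v (v.symm k)) := by
          rw [Equiv.apply_symm_apply]
          exact hcl hiK hkK (fun h => hkne h.symm)
        rw [hBdef]
        simp only [Finset.coe_image, Set.mem_image, Finset.coe_filter, Set.mem_setOf_eq]
        exact ⟨v.symm k, ⟨Finset.mem_univ _, hlt, hadj⟩, Equiv.apply_symm_apply v k⟩
      obtain ⟨W', hW'𝒟, hKW', hSW'⟩ := (h𝒟sep i).2 (K.erase (v i)) (S ∩ B i)
        hK'B
        (by intro x hx
            rw [Finset.coe_inter] at hx
            exact hx.2)
        (hcl.subset (by exact_mod_cast Finset.erase_subset _ _))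
        (by refine Set.Pairwise.mono ?_ hst
            intro x hx
            rw [Finset.coe_inter] at hx
            exact hx.1)
        (Finset.disjoint_of_subset_left (Finset.erase_subset _ _)
          (Finset.disjoint_of_subset_right Finset.inter_subset_left hdis))
      refine ⟨insert (v i) W', ?_, ?_, ?_⟩
      · refine Finset.mem_insert_of_mem ?_
        rw [Finset.mem_biUnion]
        exact ⟨i, Finset.mem_univ _, Finset.mem_image_of_mem _ hW'𝒟⟩
      · intro k hk
        by_cases hkvi : k = v i
        · exact hkvi ▸ Finset.mem_insert_self _ _
        · exact Finset.mem_insert_of_mem (hKW' (Finset.mem_erase.mpr ⟨hkvi, hk⟩))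
      · rw [Finset.disjoint_left]
        intro x hxS hxW
        rcases Finset.mem_insert.mp hxW with rfl | hx
        · exact Finset.disjoint_left.mp hdis hiK hxS
        · have hxB : x ∈ B i := by
            have := (h𝒟sep i).1 W' hW'𝒟 (Finset.mem_coe.mpr hx)
            exact_mod_cast this
          exact Finset.disjoint_left.mp hSW' (Finset.mem_inter.mpr ⟨hxS, hxB⟩) hx


-- STATEMENT 7
set_option maxHeartbeats 1000000 in
/-- graphs with back-degree at most `n^(s/√(log n))` under some vertex
ordering admit polynomial-size CS-separators. -/
theorem stmt_7 (s : ℝ) (hs : 0 < s) :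
    ∃ K c : ℝ, ∀ (V : Type) [Fintype V] (G : SimpleGraph V) (n : ℕ),
      n = Fintype.card V → 2 ≤ n → ∀ v : Fin n ≃ V,
      (∀ i : Fin n, (i : ℕ) + 1 < n →
        ({j : Fin n | i < j ∧ G.Adj (v i) (v j)}.ncard : ℝ)
          ≤ (n : ℝ) ^ (s / Real.sqrt (Real.log n))) →
      ∃ f : ℕ, (f : ℝ) ≤ K * (n : ℝ) ^ c ∧ HasCSSepOn G Set.univ f := by
  refine ⟨1 + 1200 * Real.exp 30, 20 * s^2 + 1, ?_⟩
  intro V _ G n hn h2 v hdeg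
  classical
  have hn1 : (1:ℝ) < (n:ℝ) := by exact_mod_cast h2
  have hnpos : (0:ℝ) < (n:ℝ) := by linarith
  set L := Real.log (n:ℝ) with hLdef
  have hLpos : 0 < L := Real.log_pos hn1
  have hsqrtpos : 0 < Real.sqrt L := Real.sqrt_pos.mpr hLpos
  have hsq : Real.sqrt L * Real.sqrt L = L := Real.mul_self_sqrt hLpos.le
  set D := (n:ℝ) ^ (s / Real.sqrt L) with hDdef
  have hDexp : D = Real.exp (s * Real.sqrt L) := by
    rw [hDdef, Real.rpow_def_of_pos hnpos, ← hLdef]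
    congr 1
    field_simp
    nlinarith
  have hD1 : 1 ≤ D := by
    rw [hDexp, Real.one_le_exp_iff]
    positivity
  set d := ⌊D⌋₊ with hddef
  have hdD : (d:ℝ) ≤ D := Nat.floor_le (by linarith)
  have hd_card : ∀ i : Fin n, {j : Fin n | i < j ∧ G.Adj (v i) (v j)}.ncard ≤ d := by
    intro i
    by_cases hi : (i:ℕ) + 1 < n
    · exact Nat.le_floor (hdeg i hi)
    · have hempty : {j : Fin n | i < j ∧ G.Adj (v i) (v j)} = ∅ := by
        ext j
        simp only [Set.mem_setOf_eq, Set.mem_empty_iff_false, iff_false, not_and]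
        intro hij
        rw [Fin.lt_def] at hij
        have := j.isLt
        have := i.isLt
        omega
      rw [hempty, Set.ncard_empty]
      exact Nat.zero_le d
  have hsep := lemB G n hn v d hd_card
  refine ⟨1 + n * g d, ?_, hsep⟩
  -- arithmetic
  have hlog3 : Real.log 3 ≤ 6/5 := by
    rw [Real.log_le_iff_le_exp (by norm_num : (0:ℝ) < 3)]
    have h1 : (2.7182818283 : ℝ) < Real.exp 1 := Real.exp_one_gt_d9
    have h2' : (1:ℝ) + 1/5 ≤ Real.exp (1/5) := by
      have := Real.add_one_le_exp ((1:ℝ)/5)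
      linarith
    have h3 : Real.exp (6/5 : ℝ) = Real.exp 1 * Real.exp (1/5) := by
      rw [← Real.exp_add]; norm_num
    nlinarith [Real.exp_pos ((1:ℝ)/5)]
  have hlog3' : (0:ℝ) ≤ Real.log 3 := Real.log_nonneg (by norm_num)
  have hlogd : Real.log ((d:ℝ) + 2) ≤ Real.log 3 + s * Real.sqrt L := by
    have h1 : (d:ℝ) + 2 ≤ 3 * D := by linarith
    calc Real.log ((d:ℝ) + 2) ≤ Real.log (3 * D) := Real.log_le_log (by positivity) h1
      _ = Real.log 3 + Real.log D := Real.log_mul (by norm_num) (by linarith)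
      _ = Real.log 3 + s * Real.sqrt L := by rw [hDexp, Real.log_exp]
  have hlogd0 : 0 ≤ Real.log ((d:ℝ) + 2) := Real.log_nonneg (by have := Nat.cast_nonneg (α := ℝ) d; linarith)
  have hsq2 : (Real.log ((d:ℝ) + 2))^2 ≤ 3 + 2 * s^2 * L := by
    have h1 : (Real.log ((d:ℝ)+2))^2 ≤ (Real.log 3 + s * Real.sqrt L)^2 := by
      nlinarith
    have h2' : (Real.log 3 + s * Real.sqrt L)^2
        ≤ 2 * (Real.log 3)^2 + 2 * (s * Real.sqrt L)^2 := by nlinarith [sq_nonneg (Real.log 3 - s * Real.sqrt L)]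
    have h3 : (s * Real.sqrt L)^2 = s^2 * L := by
      rw [mul_pow, Real.sq_sqrt hLpos.le]
    nlinarith
  have hgd : (g d : ℝ) ≤ 1200 * Real.exp (30 + 20 * s^2 * L) := by
    calc (g d : ℝ) ≤ 1200 * Real.exp (10 * (Real.log ((d:ℝ) + 2))^2) := g_le d
      _ ≤ 1200 * Real.exp (30 + 20 * s^2 * L) := by
          have : 10 * (Real.log ((d:ℝ) + 2))^2 ≤ 30 + 20 * s^2 * L := by nlinarith
          have := Real.exp_le_exp.mpr this
          linarith
  have hnL : (n:ℝ) = Real.exp L := (Real.exp_log hnpos).symm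
  have hrpow : (n:ℝ) ^ ((20 * s^2 + 1 : ℝ)) = Real.exp ((20 * s^2 + 1) * L) := by
    rw [Real.rpow_def_of_pos hnpos, ← hLdef]
    ring_nf
  have hnexp : (n:ℝ) * (1200 * Real.exp (30 + 20 * s^2 * L))
      = 1200 * Real.exp 30 * (n:ℝ) ^ ((20 * s^2 + 1 : ℝ)) := by
    have e1 : Real.exp (30 + 20 * s^2 * L) = Real.exp 30 * Real.exp (20 * s^2 * L) := by
      rw [← Real.exp_add]
    have e2 : Real.exp ((20 * s^2 + 1) * L) = Real.exp (20 * s^2 * L) * Real.exp L := by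
      rw [← Real.exp_add]; congr 1; ring
    rw [hrpow, hnL, e1, e2]
    ring
  have hone : (1:ℝ) ≤ (n:ℝ) ^ ((20 * s^2 + 1 : ℝ)) := by
    rw [hrpow, Real.one_le_exp_iff]
    positivity
  have hcast : ((1 + n * g d : ℕ) : ℝ) = 1 + (n:ℝ) * (g d : ℝ) := by push_cast; ring
  rw [hcast]
  have hfin : (n:ℝ) * (g d : ℝ) ≤ 1200 * Real.exp 30 * (n:ℝ) ^ ((20 * s^2 + 1 : ℝ)) := by
    calc (n:ℝ) * (g d : ℝ) ≤ (n:ℝ) * (1200 * Real.exp (30 + 20 * s^2 * L)) := by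
          exact mul_le_mul_of_nonneg_left hgd (by linarith)
      _ = 1200 * Real.exp 30 * (n:ℝ) ^ ((20 * s^2 + 1 : ℝ)) := hnexp
  nlinarith [Real.exp_pos (30:ℝ)]
end

section
/- Let c, c′ > 0 be constants and let 𝒞 and 𝒞′ be classes of finite simple graphs. Suppose there is a constant K such that every graph in 𝒞′ on m vertices admits a CS-separator of size at most K·m^{c′}, and suppose 𝒞 is at distance c·log₂(n) of 𝒞′, i.e., every graph G ∈ 𝒞 on n vertices contains a set D ⊆ V(G) with |D| ≤ c·log₂(n) such that G ∖ D ∈ 𝒞′. Then there is a constant K′ such that every graph G ∈ 𝒞 on n vertices admits a CS-separator of size at most K′·n^{c′+c}. -/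
open SimpleGraph

variable {V : Type*}

/-- A class of finite simple graphs. -/
def GraphClass : Type 1 := ∀ (W : Type) [Finite W], SimpleGraph W → Prop

/-- if `𝒞'` has the `O(n^c')`-CS-separation property and `𝒞` is at distance
`c·log₂ n` of `𝒞'`, then `𝒞` has the `O(n^(c'+c))`-CS-separation property. -/
theorem stmt_9 (c c' : ℝ) (hc : 0 < c) (hc' : 0 < c') (𝒞 𝒞' : GraphClass) (K : ℝ)
    (hsep' : ∀ (W : Type) [Finite W] (H : SimpleGraph W), 𝒞' W H →
      ∃ f : ℕ, (f : ℝ) ≤ K * (Nat.card W : ℝ) ^ c' ∧ HasCSSepOn H Set.univ f)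
    (hdist : ∀ (W : Type) [Finite W] (G : SimpleGraph W), 𝒞 W G →
      ∃ D : Set W, (D.ncard : ℝ) ≤ c * Real.logb 2 (Nat.card W) ∧
        𝒞' (Dᶜ : Set W) (G.induce (Dᶜ : Set W))) :
    ∃ K' : ℝ, ∀ (W : Type) [Finite W] (G : SimpleGraph W), 𝒞 W G →
      ∃ f : ℕ, (f : ℝ) ≤ K' * (Nat.card W : ℝ) ^ (c' + c) ∧ HasCSSepOn G Set.univ f := by
  classical
  refine ⟨K, ?_⟩
  intro W _ G hG
  obtain ⟨D, hDcard, hD'⟩ := hdist W G hG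
  obtain ⟨f, hf, 𝒮, h𝒮card, h𝒮sub, h𝒮sep⟩ := hsep' _ _ hD'
  -- 𝒮 is nonempty (apply to empty clique/stable set)
  have hne : 𝒮.Nonempty := by
    obtain ⟨W₀, hW₀, -⟩ := h𝒮sep ∅ ∅ (by simp) (by simp) (by simp) (by simp [IsStableSet])
      (by simp)
    exact ⟨W₀, hW₀⟩
  have h1f : 1 ≤ f := le_trans (Finset.card_pos.mpr hne) h𝒮card
  set m : ℕ := Nat.card (Dᶜ : Set W) with hm
  set n : ℕ := Nat.card W with hn
  have hmn : m ≤ n := Nat.card_le_card_of_injective _ Subtype.val_injective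
  -- n ≥ 1
  have hn1 : 1 ≤ n := by
    by_contra h
    have hn0 : n = 0 := by omega
    have hm0 : m = 0 := by omega
    have : (f : ℝ) ≤ 0 := by
      rw [hm0] at hf
      simpa [Real.zero_rpow hc'.ne'] using hf
    have : (1:ℝ) ≤ 0 := le_trans (by exact_mod_cast h1f) this
    linarith
  have hnpos : (0:ℝ) < (n:ℝ) := by exact_mod_cast hn1
  -- K > 0
  have hK : 0 < K := by
    by_contra h
    push_neg at h
    have h1 : (1:ℝ) ≤ K * (m:ℝ) ^ c' := le_trans (by exact_mod_cast h1f) hf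
    nlinarith [Real.rpow_nonneg (by positivity : (0:ℝ) ≤ (m:ℝ)) c']
  have hfn : (f : ℝ) ≤ K * (n:ℝ) ^ c' := by
    refine le_trans hf ?_
    exact mul_le_mul_of_nonneg_left
      (Real.rpow_le_rpow (by positivity) (by exact_mod_cast hmn) hc'.le) hK.le
  -- D is finite
  have hDfin : D.Finite := Set.toFinite D
  set d : ℕ := D.ncard with hd
  have hdcard : hDfin.toFinset.card = d := (Set.ncard_eq_toFinset_card D hDfin).symm
  -- 2^d ≤ n^c
  have h2d : ((2:ℝ)) ^ (d:ℕ) ≤ (n:ℝ) ^ c := by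
    have h1 : ((2:ℝ)) ^ (d:ℕ) ≤ (2:ℝ) ^ (c * Real.logb 2 (n:ℝ)) := by
      rw [← Real.rpow_natCast]
      exact (Real.rpow_le_rpow_left_iff (by norm_num)).mpr hDcard
    have h2 : (2:ℝ) ^ (c * Real.logb 2 (n:ℝ)) = (n:ℝ) ^ c := by
      rw [mul_comm, Real.rpow_mul (by norm_num), Real.rpow_logb (by norm_num) (by norm_num) hnpos]
    linarith [h1, h2.le]
  -- the new separator
  set emb : (Dᶜ : Set W) ↪ W := Function.Embedding.subtype _ with hemb
  set fam : Finset (Finset W) :=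
    (𝒮 ×ˢ hDfin.toFinset.powerset).image (fun p => p.1.map emb ∪ p.2) with hfam
  refine ⟨f * 2 ^ d, ?_, fam, ?_, ?_, ?_⟩
  · -- size bound
    have : (f:ℝ) * (2:ℝ)^(d:ℕ) ≤ (K * (n:ℝ)^c') * ((n:ℝ)^c) :=
      mul_le_mul hfn h2d (by positivity) (by positivity)
    calc ((f * 2 ^ d : ℕ) : ℝ) = (f:ℝ) * (2:ℝ)^(d:ℕ) := by push_cast; ring
    _ ≤ (K * (n:ℝ)^c') * ((n:ℝ)^c) := this
    _ = K * (n:ℝ) ^ (c' + c) := by rw [Real.rpow_add hnpos]; ring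
  · -- card of fam
    calc fam.card ≤ (𝒮 ×ˢ hDfin.toFinset.powerset).card := Finset.card_image_le
    _ = 𝒮.card * 2 ^ d := by rw [Finset.card_product, Finset.card_powerset, hdcard]
    _ ≤ f * 2 ^ d := Nat.mul_le_mul_right _ h𝒮card
  · intro W' _; exact Set.subset_univ _
  · intro Kf Sf _ _ hKclique hSstable hKS
    -- restrict to Dᶜ
    set K₀ : Finset (Dᶜ : Set W) := Kf.subtype (· ∈ (Dᶜ : Set W)) with hK₀
    set S₀ : Finset (Dᶜ : Set W) := Sf.subtype (· ∈ (Dᶜ : Set W)) with hS₀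
    have hK₀c : (G.induce (Dᶜ : Set W)).IsClique (K₀ : Set (Dᶜ : Set W)) := by
      intro u hu v hv huv
      rw [Finset.mem_coe, hK₀, Finset.mem_subtype] at hu hv
      exact hKclique hu hv (fun h => huv (Subtype.ext h))
    have hS₀s : IsStableSet (G.induce (Dᶜ : Set W)) (S₀ : Set (Dᶜ : Set W)) := by
      intro u hu v hv huv
      rw [Finset.mem_coe, hS₀, Finset.mem_subtype] at hu hv
      exact hSstable hu hv (fun h => huv (Subtype.ext h))
    have hdis₀ : Disjoint K₀ S₀ := by
      rw [Finset.disjoint_left]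
      intro a haK haS
      rw [hK₀, Finset.mem_subtype] at haK
      rw [hS₀, Finset.mem_subtype] at haS
      exact Finset.disjoint_left.mp hKS haK haS
    obtain ⟨W₀, hW₀mem, hKW₀, hSW₀⟩ := h𝒮sep K₀ S₀ (Set.subset_univ _) (Set.subset_univ _)
      hK₀c hS₀s hdis₀
    refine ⟨W₀.map emb ∪ Kf.filter (· ∈ D), ?_, ?_, ?_⟩
    · rw [hfam, Finset.mem_image]
      refine ⟨(W₀, Kf.filter (· ∈ D)), ?_, rfl⟩
      rw [Finset.mem_product, Finset.mem_powerset]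
      exact ⟨hW₀mem, fun x hx => hDfin.mem_toFinset.mpr (Finset.mem_filter.mp hx).2⟩
    · intro x hx
      by_cases hxD : x ∈ D
      · exact Finset.mem_union_right _ (Finset.mem_filter.mpr ⟨hx, hxD⟩)
      · refine Finset.mem_union_left _ ?_
        rw [Finset.mem_map]
        refine ⟨⟨x, hxD⟩, hKW₀ ?_, rfl⟩
        rw [hK₀, Finset.mem_subtype]
        exact hx
    · rw [Finset.disjoint_left]
      intro x hxS hxU
      rcases Finset.mem_union.mp hxU with hx | hx
      · rw [Finset.mem_map] at hx
        obtain ⟨y, hyW₀, hyx⟩ := hx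
        have hyS₀ : y ∈ S₀ := by
          rw [hS₀, Finset.mem_subtype]
          have : (emb y : W) = x := hyx
          rw [hemb] at this
          simp only [Function.Embedding.coe_subtype] at this
          rwa [this]
        exact Finset.disjoint_left.mp hSW₀ hyS₀ hyW₀
      · exact Finset.disjoint_left.mp hKS (Finset.mem_filter.mp hx).1 hxS
end

section
/- Let T be a finite rooted binary tree in which every internal node has exactly two children, let V be a finite set, let φ be a map assigning to each node t of T a subset φ(t) ⊆ V such that φ(s) ⊆ φ(t) whenever s is a child of t, let 𝒮 be a set of subsets of V, and let ℓ be a map assigning to each internal node t of T an element ℓ(t) ∈ 𝒮 with ℓ(t) ⊆ φ(t). Suppose that for every internal node t with children s and s′: (1) ℓ(t) ⊄ φ(s) and ℓ(t) ⊄ φ(s′); and (2) no member of 𝒮 is a subset of φ(s) ∩ φ(s′), unless s or s′ is a leaf. Then ℓ is injective on the internal nodes of T. -/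
/-- A finite rooted binary tree, whose nodes are encoded by the list of left/right
(`false`/`true`) choices leading from the root to the node.  Every node is either a
leaf or an internal node with exactly two children. -/
structure RootedBinaryTree : Type where
  /-- the set of nodes -/
  isNode : List Bool → Prop
  /-- the root is a node -/
  root_isNode : isNode []
  /-- the parent of a node is a node -/
  parent_isNode : ∀ (l : List Bool) (b : Bool), isNode (l ++ [b]) → isNode l
  /-- children come in pairs: a node has a left child iff it has a right child -/
  two_children : ∀ l : List Bool, isNode (l ++ [false]) ↔ isNode (l ++ [true])
  /-- the tree is finite -/
  finite : {l : List Bool | isNode l}.Finite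

/-- An internal node: a node having (two) children. -/
def RootedBinaryTree.IsInternal (T : RootedBinaryTree) (l : List Bool) : Prop :=
  T.isNode l ∧ T.isNode (l ++ [false])

/-- A leaf: a node having no children. -/
def RootedBinaryTree.IsLeaf (T : RootedBinaryTree) (l : List Bool) : Prop :=
  T.isNode l ∧ ¬ T.isNode (l ++ [false])

/-- sufficient conditions for an `𝒮`-labeling `ℓ` of a decomposition tree
to be injective (on internal nodes). -/
theorem stmt_17 {V : Type*} [Finite V] (T : RootedBinaryTree)
    (φ : List Bool → Set V)
    (hφ : ∀ (l : List Bool) (b : Bool), T.isNode (l ++ [b]) → φ (l ++ [b]) ⊆ φ l)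
    (𝒮 : Set (Set V)) (ℓ : List Bool → Set V)
    (hℓ𝒮 : ∀ l, T.IsInternal l → ℓ l ∈ 𝒮)
    (hℓφ : ∀ l, T.IsInternal l → ℓ l ⊆ φ l)
    (h1 : ∀ l, T.IsInternal l →
      ¬ ℓ l ⊆ φ (l ++ [false]) ∧ ¬ ℓ l ⊆ φ (l ++ [true]))
    (h2 : ∀ l, T.IsInternal l →
      ¬ T.IsLeaf (l ++ [false]) → ¬ T.IsLeaf (l ++ [true]) →
      ∀ X ∈ 𝒮, ¬ X ⊆ φ (l ++ [false]) ∩ φ (l ++ [true])) :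
    ∀ l l', T.IsInternal l → T.IsInternal l' → ℓ l = ℓ l' → l = l' := by
  -- A: walking up from `l ++ t` to `l` : nodes stay nodes and φ shrinks
  have hcons : ∀ (m : List Bool) (b : Bool) (r : List Bool), (m ++ [b]) ++ r = m ++ b :: r := by
    intro m b r; rw [List.append_assoc]; rfl
  have hA : ∀ (t l : List Bool), T.isNode (l ++ t) → T.isNode l ∧ φ (l ++ t) ⊆ φ l := by
    intro t
    induction t using List.reverseRecOn with
    | nil => intro l h; rw [List.append_nil] at h ⊢; exact ⟨h, subset_rfl⟩
    | append_singleton t b ih =>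
      intro l h
      rw [← List.append_assoc] at h
      obtain ⟨hn, hs⟩ := ih l (T.parent_isNode _ _ h)
      exact ⟨hn, by rw [← List.append_assoc]; exact (hφ _ _ h).trans hs⟩
  -- B: ancestors (incl. itself) of an internal node are not leaves
  have hB : ∀ (m rest : List Bool), T.IsInternal (m ++ rest) → ¬ T.IsLeaf m := by
    intro m rest hint hleaf
    rcases rest with _ | ⟨c, rest2⟩
    · simp only [List.append_nil] at hint
      exact hleaf.2 hint.2
    · have hc : T.isNode (m ++ [c]) :=
        (hA rest2 (m ++ [c]) (by rw [hcons]; exact hint.1)).1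
      cases c
      · exact hleaf.2 hc
      · exact hleaf.2 ((T.two_children m).mpr hc)
  -- splitting two distinct lists
  have hsplit : ∀ (l l' : List Bool), l ≠ l' →
      (∃ t, t ≠ [] ∧ l' = l ++ t) ∨ (∃ t, t ≠ [] ∧ l = l' ++ t) ∨
      ∃ m b rest rest', l = m ++ b :: rest ∧ l' = m ++ (!b) :: rest' := by
    intro l
    induction l with
    | nil =>
      intro l' h
      exact Or.inl ⟨l', fun he => h he.symm, (List.nil_append l').symm⟩
    | cons a ls ih =>
      intro l' h
      rcases l' with _ | ⟨a', ls'⟩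
      · exact Or.inr (Or.inl ⟨a :: ls, by simp, by simp⟩)
      · by_cases hab : a = a'
        · subst hab
          rcases ih ls' (fun he => h (by rw [he])) with ⟨t, ht, he⟩ | ⟨t, ht, he⟩ |
            ⟨m, b, r, r', e1, e2⟩
          · exact Or.inl ⟨t, ht, by rw [he]; rfl⟩
          · exact Or.inr (Or.inl ⟨t, ht, by rw [he]; rfl⟩)
          · exact Or.inr (Or.inr ⟨a :: m, b, r, r', by rw [e1]; rfl, by rw [e2]; rfl⟩)
        · refine Or.inr (Or.inr ⟨[], a, ls, ls', rfl, ?_⟩)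
          cases a <;> cases a' <;> simp_all
  intro l l' hl hl' heq
  by_contra hne
  rcases hsplit l l' hne with ⟨t, ht, he⟩ | ⟨t, ht, he⟩ | ⟨m, b, r, r', e1, e2⟩
  · -- l' strictly below l
    rcases t with _ | ⟨c, t2⟩
    · exact ht rfl
    · have hsub : φ l' ⊆ φ (l ++ [c]) := by
        rw [he, ← hcons]
        exact (hA t2 (l ++ [c]) (by rw [hcons, ← he]; exact hl'.1)).2
      have : ℓ l ⊆ φ (l ++ [c]) := heq ▸ (hℓφ l' hl').trans hsub
      cases c
      · exact (h1 l hl).1 this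
      · exact (h1 l hl).2 this
  · -- l strictly below l'
    rcases t with _ | ⟨c, t2⟩
    · exact ht rfl
    · have hsub : φ l ⊆ φ (l' ++ [c]) := by
        rw [he, ← hcons]
        exact (hA t2 (l' ++ [c]) (by rw [hcons, ← he]; exact hl.1)).2
      have : ℓ l' ⊆ φ (l' ++ [c]) := heq ▸ (hℓφ l hl).trans hsub
      cases c
      · exact (h1 l' hl').1 this
      · exact (h1 l' hl').2 this
  · -- divergence at m
    have hAl := hA r (m ++ [b]) (by rw [hcons, ← e1]; exact hl.1)
    have hAl' := hA r' (m ++ [!b]) (by rw [hcons, ← e2]; exact hl'.1)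
    have hsubl : ℓ l ⊆ φ (m ++ [b]) := (hℓφ l hl).trans (by rw [e1, ← hcons]; exact hAl.2)
    have hsubl' : ℓ l ⊆ φ (m ++ [!b]) :=
      heq ▸ (hℓφ l' hl').trans (by rw [e2, ← hcons]; exact hAl'.2)
    have hmnode : T.isNode m := T.parent_isNode m b hAl.1
    have hmf : T.isNode (m ++ [false]) := by
      cases b
      · exact hAl.1
      · exact (T.two_children m).mpr hAl.1
    have hmint : T.IsInternal m := ⟨hmnode, hmf⟩
    have hnlb : ¬ T.IsLeaf (m ++ [b]) := hB (m ++ [b]) r (by rw [hcons, ← e1]; exact hl)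
    have hnlb' : ¬ T.IsLeaf (m ++ [!b]) := hB (m ++ [!b]) r' (by rw [hcons, ← e2]; exact hl')
    have hinter : ℓ l ⊆ φ (m ++ [false]) ∩ φ (m ++ [true]) := by
      cases b
      · exact Set.subset_inter hsubl hsubl'
      · exact Set.subset_inter hsubl' hsubl
    cases b
    · exact h2 m hmint hnlb (by simpa using hnlb') (ℓ l) (hℓ𝒮 l hl) hinter
    · exact h2 m hmint (by simpa using hnlb') hnlb (ℓ l) (hℓ𝒮 l hl) hinter
end
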